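/- arXiv:1205.6733 — 9 statements merged into one kernel-verified Lean document; each statement's English description precedes it below -/
import Mathlib

section
/- In the tree model, let the propagator be defined by q_{k-1,k}(f) = g_{k-1,k}·K_k(f)/μ_{k-1}(g_{k-1,k}) and composition q_{j,k}(f) = q_{j,j+1}(q_{j+1,j+2}(…q_{k-1,k}(f))). Then for all 0 ≤ j < k ≤ n, every f : I_k → ℝ and every x ∈ I_j one has q_{j,k}(f)(x) = μ_k(f·1_{s_k(x)})/μ_j(x). In particular |q_{j,k}(f)(x)| ≤ (max_{y∈I_k}|f(y)|)·q_{j,k}(1)(x) ≤ (max_{y∈I_k}|f(y)|)·(max_{z∈I_j} μ_k^{→j}(z)/μ_j(z)). -/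
/-!
Multiplying the propagator by the current weight turns the recursion into a pushforward of masses:
`q_{j,k}(f)(x) μ_j(x)` is the mass that `f μ_k` puts on the subtree `s_k(x)`. For one step this is
because the normalisation `μ_{j+1}(s_{j+1}(x))` of `K_{j+1}` is exactly cancelled by the density
`g_{j,j+1}(x) μ_j(x) / μ_j(g_{j,j+1})`; longer steps follow by summing fibre by fibre along the
transitive predecessor maps. The bounds then only use `|∑ f μ_k| ≤ max |f| · ∑ μ_k` over `s_k(x)`.
-/

open Finset

theorem Fintype.sum_ite_fiber_comp {α β γ M : Type*} [Fintype β] [Fintype γ] [DecidableEq α]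
    [DecidableEq β] [AddCommMonoid M] (a : γ → β) (b : β → α) (F : γ → M) (x : α) :
    ∑ y, (if b y = x then ∑ z, (if a z = y then F z else 0) else 0)
      = ∑ z, if b (a z) = x then F z else 0 := by
  calc ∑ y, (if b y = x then ∑ z, (if a z = y then F z else 0) else 0)
      = ∑ y, ∑ z, if a z = y then (if b y = x then F z else 0) else 0 := by
        refine Finset.sum_congr rfl fun y _ => ?_
        split_ifs <;> simp [*]
    _ = ∑ z, ∑ y, if a z = y then (if b y = x then F z else 0) else 0 := sum_comm
    _ = ∑ z, if b (a z) = x then F z else 0 := by simp only [sum_ite_eq]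

theorem abs_sum_ite_mul_le {β : Type*} [Fintype β] (P : β → Prop) [DecidablePred P]
    (f w : β → ℝ) (hw : ∀ y, 0 ≤ w y) {M : ℝ} (hf : ∀ y, |f y| ≤ M) :
    |∑ y, if P y then f y * w y else 0| ≤ M * ∑ y, if P y then w y else 0 := by
  rw [mul_sum]
  refine (abs_sum_le_sum_abs _ _).trans (sum_le_sum fun y _ => ?_)
  split_ifs
  · rw [abs_mul, abs_of_nonneg (hw y)]
    exact mul_le_mul_of_nonneg_right (hf y) (hw y)
  · simp

theorem propagator_mul_weight_step
    (n : ℕ) (I : ℕ → Type) [∀ k, Fintype (I k)] [∀ k, DecidableEq (I k)]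
    (μ : ∀ k, I k → ℝ) (hμpos : ∀ k, k ≤ n → ∀ x, 0 < μ k x)
    (p : ∀ j k : ℕ, I k → I j)
    (g : ∀ k, I k → ℝ) (hgpos : ∀ k, k < n → ∀ x, 0 < g k x)
    (hgdens : ∀ k, k < n → ∀ x : I k,
      (∑ y : I (k+1), if p k (k+1) y = x then μ (k+1) y else 0)
        = g k x * μ k x / (∑ z, g k z * μ k z))
    (K : ∀ k, I k → I (k+1) → ℝ)
    (hK : ∀ k, k < n → ∀ (x : I k) (y : I (k+1)),
      K k x y = if p k (k+1) y = x
        then μ (k+1) y / (∑ y' : I (k+1), if p k (k+1) y' = x then μ (k+1) y' else 0)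
        else 0)
    (q : ∀ j k : ℕ, (I k → ℝ) → I j → ℝ)
    (hqstep : ∀ j k : ℕ, j < k → k ≤ n → ∀ (f : I k → ℝ) (x : I j),
      q j k f x = g j x * (∑ y : I (j+1), K j x y * q (j+1) k f y)
                    / (∑ z, μ j z * g j z))
    {j k : ℕ} (hjk : j < k) (hkn : k ≤ n) (f : I k → ℝ) (x : I j) :
    q j k f x * μ j x
      = ∑ y : I (j+1), if p j (j+1) y = x then q (j+1) k f y * μ (j+1) y else 0 := by
  have hjn : j < n := by omega
  have hZ : 0 < ∑ z, g j z * μ j z :=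
    sum_pos (fun z _ => mul_pos (hgpos j hjn z) (hμpos j hjn.le z)) ⟨x, mem_univ x⟩
  have hgx := hgpos j hjn x
  have hμx := hμpos j hjn.le x
  have hK_sum : ∑ y, K j x y * q (j+1) k f y
      = (∑ y, if p j (j+1) y = x then q (j+1) k f y * μ (j+1) y else 0)
          / (g j x * μ j x / ∑ z, g j z * μ j z) := by
    rw [← hgdens j hjn x, sum_div]
    refine sum_congr rfl fun y _ => ?_
    rw [hK j hjn x y]
    split_ifs <;> ring
  have hZ_comm : ∑ z, μ j z * g j z = ∑ z, g j z * μ j z :=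
    sum_congr rfl fun z _ => mul_comm _ _
  rw [hqstep j k hjk hkn, hK_sum, hZ_comm]
  field_simp

theorem propagator_mul_weight
    (n : ℕ) (I : ℕ → Type) [∀ k, Fintype (I k)] [∀ k, DecidableEq (I k)]
    (μ : ∀ k, I k → ℝ) (hμpos : ∀ k, k ≤ n → ∀ x, 0 < μ k x)
    (p : ∀ j k : ℕ, I k → I j)
    (htrans : ∀ j k l : ℕ, j < k → k < l → l ≤ n → ∀ x : I l, p j l x = p j k (p k l x))
    (g : ∀ k, I k → ℝ) (hgpos : ∀ k, k < n → ∀ x, 0 < g k x)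
    (hgdens : ∀ k, k < n → ∀ x : I k,
      (∑ y : I (k+1), if p k (k+1) y = x then μ (k+1) y else 0)
        = g k x * μ k x / (∑ z, g k z * μ k z))
    (K : ∀ k, I k → I (k+1) → ℝ)
    (hK : ∀ k, k < n → ∀ (x : I k) (y : I (k+1)),
      K k x y = if p k (k+1) y = x
        then μ (k+1) y / (∑ y' : I (k+1), if p k (k+1) y' = x then μ (k+1) y' else 0)
        else 0)
    (q : ∀ j k : ℕ, (I k → ℝ) → I j → ℝ)
    (hqdiag : ∀ (k : ℕ) (f : I k → ℝ), q k k f = f)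
    (hqstep : ∀ j k : ℕ, j < k → k ≤ n → ∀ (f : I k → ℝ) (x : I j),
      q j k f x = g j x * (∑ y : I (j+1), K j x y * q (j+1) k f y)
                    / (∑ z, μ j z * g j z))
    {j k : ℕ} (hjk : j < k) (hkn : k ≤ n) (f : I k → ℝ) (x : I j) :
    q j k f x * μ j x = ∑ y : I k, if p j k y = x then f y * μ k y else 0 := by
  have step := @propagator_mul_weight_step n I _ _ μ hμpos p g hgpos hgdens K hK q hqstep
  obtain ⟨d, hd⟩ : ∃ d, j + d + 1 = k := ⟨k - j - 1, by omega⟩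
  induction d generalizing j with
  | zero =>
    subst hd
    rw [step hjk hkn, hqdiag]
  | succ d ih =>
    rw [step hjk hkn]
    simp_rw [fun y => ih (j := j + 1) (by omega) y (by omega)]
    rw [Fintype.sum_ite_fiber_comp]
    simp only [← htrans j (j+1) k (by omega) (by omega) hkn]

theorem stmt_0_general
    (n : ℕ) (I : ℕ → Type)
    [∀ k, Fintype (I k)] [∀ k, Nonempty (I k)] [∀ k, DecidableEq (I k)]
    (μ : ∀ k, I k → ℝ)
    (hμpos : ∀ k, k ≤ n → ∀ x, 0 < μ k x)
    -- predecessor maps (meaningful for j < k) and their transitivity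
    (p : ∀ j k : ℕ, I k → I j)
    (htrans : ∀ j k l : ℕ, j < k → k < l → l ≤ n → ∀ x : I l, p j l x = p j k (p k l x))
    -- unnormalized relative density between μ_k and the projection of μ_{k+1} to I_k
    (g : ∀ k, I k → ℝ)
    (hgpos : ∀ k, k < n → ∀ x, 0 < g k x)
    (hgdens : ∀ k, k < n → ∀ x : I k,
      (∑ y : I (k+1), if p k (k+1) y = x then μ (k+1) y else 0)
        = g k x * μ k x / (∑ z, g k z * μ k z))
    -- the Markov transition kernel K_{k+1}
    (K : ∀ k, I k → I (k+1) → ℝ)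
    (hK : ∀ k, k < n → ∀ (x : I k) (y : I (k+1)),
      K k x y = if p k (k+1) y = x
        then μ (k+1) y / (∑ y' : I (k+1), if p k (k+1) y' = x then μ (k+1) y' else 0)
        else 0)
    -- the Feynman-Kac propagator q_{j,k}:
    -- q_{k,k}(f) = f,  q_{j,k}(f) = q_{j,j+1}(q_{j+1,k}(f)) with
    -- q_{j,j+1}(h) = g_{j,j+1}·K_{j+1}(h)/μ_j(g_{j,j+1})
    (q : ∀ j k : ℕ, (I k → ℝ) → I j → ℝ)
    (hqdiag : ∀ (k : ℕ) (f : I k → ℝ), q k k f = f)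
    (hqstep : ∀ j k : ℕ, j < k → k ≤ n → ∀ (f : I k → ℝ) (x : I j),
      q j k f x = g j x * (∑ y : I (j+1), K j x y * q (j+1) k f y)
                    / (∑ z, μ j z * g j z)) :
    ∀ j k : ℕ, j < k → k ≤ n → ∀ (f : I k → ℝ) (x : I j),
      q j k f x = (∑ y : I k, if p j k y = x then f y * μ k y else 0) / μ j x
      ∧ |q j k f x|
          ≤ (Finset.univ.sup' Finset.univ_nonempty fun y : I k => |f y|)
              * q j k (fun _ => (1:ℝ)) x
      ∧ (Finset.univ.sup' Finset.univ_nonempty fun y : I k => |f y|)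
              * q j k (fun _ => (1:ℝ)) x
          ≤ (Finset.univ.sup' Finset.univ_nonempty fun y : I k => |f y|)
              * (Finset.univ.sup' Finset.univ_nonempty fun z : I j =>
                  (∑ y : I k, if p j k y = z then μ k y else 0) / μ j z) := by
  intro j k hjk hkn f x
  have hμx := hμpos j (by omega) x
  have formula : ∀ f : I k → ℝ,
      q j k f x = (∑ y : I k, if p j k y = x then f y * μ k y else 0) / μ j x := fun f =>
    eq_div_of_mul_eq hμx.ne' <| propagator_mul_weight n I μ hμpos p htrans g hgpos hgdens K hK q
      hqdiag hqstep hjk hkn f x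
  have formula_one := formula fun _ => 1
  simp only [one_mul] at formula_one
  set M := univ.sup' univ_nonempty fun y : I k => |f y|
  have hfM : ∀ y, |f y| ≤ M := fun y => le_sup' (fun y : I k => |f y|) (mem_univ y)
  have hM : 0 ≤ M := (abs_nonneg _).trans (hfM (Classical.arbitrary _))
  refine ⟨formula f, ?_, ?_⟩
  · rw [formula f, formula_one, abs_div, abs_of_pos hμx, ← mul_div_assoc]
    gcongr
    exact abs_sum_ite_mul_le _ f (μ k) (fun y => (hμpos k hkn y).le) hfM
  · rw [formula_one]
    exact mul_le_mul_of_nonneg_left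
      (le_sup' (fun z : I j => (∑ y : I k, if p j k y = z then μ k y else 0) / μ j z)
        (mem_univ x)) hM

theorem stmt_0
    (n : ℕ) (I : ℕ → Type)
    [∀ k, Fintype (I k)] [∀ k, Nonempty (I k)] [∀ k, DecidableEq (I k)]
    (μ : ∀ k, I k → ℝ)
    (hμpos : ∀ k, k ≤ n → ∀ x, 0 < μ k x)
    (hμsum : ∀ k, k ≤ n → ∑ x, μ k x = 1)
    -- predecessor maps (meaningful for j < k) and their transitivity
    (p : ∀ j k : ℕ, I k → I j)
    (htrans : ∀ j k l : ℕ, j < k → k < l → l ≤ n → ∀ x : I l, p j l x = p j k (p k l x))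
    -- no branch dies out: successor sets are nonempty
    (hsucc : ∀ k l : ℕ, k < l → l ≤ n → ∀ x : I k, ∃ y : I l, p k l y = x)
    -- unnormalized relative density between μ_k and the projection of μ_{k+1} to I_k
    (g : ∀ k, I k → ℝ)
    (hgpos : ∀ k, k < n → ∀ x, 0 < g k x)
    (hgdens : ∀ k, k < n → ∀ x : I k,
      (∑ y : I (k+1), if p k (k+1) y = x then μ (k+1) y else 0)
        = g k x * μ k x / (∑ z, g k z * μ k z))
    -- the Markov transition kernel K_{k+1}
    (K : ∀ k, I k → I (k+1) → ℝ)
    (hK : ∀ k, k < n → ∀ (x : I k) (y : I (k+1)),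
      K k x y = if p k (k+1) y = x
        then μ (k+1) y / (∑ y' : I (k+1), if p k (k+1) y' = x then μ (k+1) y' else 0)
        else 0)
    -- the Feynman-Kac propagator q_{j,k}:
    -- q_{k,k}(f) = f,  q_{j,k}(f) = q_{j,j+1}(q_{j+1,k}(f)) with
    -- q_{j,j+1}(h) = g_{j,j+1}·K_{j+1}(h)/μ_j(g_{j,j+1})
    (q : ∀ j k : ℕ, (I k → ℝ) → I j → ℝ)
    (hqdiag : ∀ (k : ℕ) (f : I k → ℝ), q k k f = f)
    (hqstep : ∀ j k : ℕ, j < k → k ≤ n → ∀ (f : I k → ℝ) (x : I j),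
      q j k f x = g j x * (∑ y : I (j+1), K j x y * q (j+1) k f y)
                    / (∑ z, μ j z * g j z)) :
    ∀ j k : ℕ, j < k → k ≤ n → ∀ (f : I k → ℝ) (x : I j),
      q j k f x = (∑ y : I k, if p j k y = x then f y * μ k y else 0) / μ j x
      ∧ |q j k f x|
          ≤ (Finset.univ.sup' Finset.univ_nonempty fun y : I k => |f y|)
              * q j k (fun _ => (1:ℝ)) x
      ∧ (Finset.univ.sup' Finset.univ_nonempty fun y : I k => |f y|)
              * q j k (fun _ => (1:ℝ)) x
          ≤ (Finset.univ.sup' Finset.univ_nonempty fun y : I k => |f y|)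
              * (Finset.univ.sup' Finset.univ_nonempty fun z : I j =>
                  (∑ y : I k, if p j k y = z then μ k y else 0) / μ j z) :=
  stmt_0_general n I μ hμpos p htrans g hgpos hgdens K hK q hqdiag hqstep
end

section
/- In the tree model, set d_{j,k} = (max_{x∈I_j} μ_k^{→j}(x)/μ_j(x))² for 0 ≤ j < k ≤ n. Then for every f : I_k → ℝ one has max( ‖q_{j,k}(f)²‖_j , ‖q_{j,k}(f)‖_j² ) ≤ d_{j,k}·‖f‖_k², and moreover Var_{μ_j}(q_{j,k}(f)) ≤ √(d_{j,k})·‖f‖_k². Consequently sup{ Σ_{j=0}^k Var_{μ_j}(q_{j,k}(f)) : ‖f‖_k ≤ 1 } ≤ Σ_{j=0}^k √(d_{j,k}) (with d_{k,k}:=1). -/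
/-!
Writing `r x = μ_k^{→j}(x) / μ_j(x)` and `M = max r`, the propagator is a fibre average of `f`
reweighted by `r`, so `|q_{j,k}(f)(x)| ≤ ‖f‖ r(x) ≤ M ‖f‖`; squaring gives the sup-norm bounds with
`d_{j,k} = M²`. For the variance, bound one factor of `q²` by `‖f‖ r(x)` and the other by `M ‖f‖`:
then `μ_j(q²) ≤ M ‖f‖² Σ_x μ_k^{→j}(x) = M ‖f‖²`, and the variance is at most the second moment.
-/

open Finset

section SupNormVariance

variable {β : Type*} [Fintype β]

def finVariance (μ g : β → ℝ) : ℝ := (∑ x, μ x * g x ^ 2) - (∑ x, μ x * g x) ^ 2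

theorem finVariance_le_sum_mul_sq (μ g : β → ℝ) : finVariance μ g ≤ ∑ x, μ x * g x ^ 2 :=
  sub_le_self _ (sq_nonneg _)

variable [Nonempty β]

def supNorm (f : β → ℝ) : ℝ := univ.sup' univ_nonempty fun y => |f y|

theorem abs_le_supNorm (f : β → ℝ) (y : β) : |f y| ≤ supNorm f :=
  le_sup' (fun y => |f y|) (mem_univ y)

theorem supNorm_nonneg (f : β → ℝ) : 0 ≤ supNorm f :=
  (abs_nonneg _).trans (abs_le_supNorm f (Classical.arbitrary β))

theorem sq_le_supNorm_sq (f : β → ℝ) (y : β) : f y ^ 2 ≤ supNorm f ^ 2 := by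
  rw [← sq_abs]
  exact pow_le_pow_left₀ (abs_nonneg _) (abs_le_supNorm f y) 2

theorem finVariance_le_supNorm_sq {ν : β → ℝ} (hν : 0 ≤ ν) (hν1 : ∑ y, ν y = 1) (f : β → ℝ) :
    finVariance ν f ≤ supNorm f ^ 2 :=
  calc finVariance ν f ≤ ∑ y, ν y * f y ^ 2 := finVariance_le_sum_mul_sq ν f
    _ ≤ ∑ y, ν y * supNorm f ^ 2 :=
        sum_le_sum fun y _ => mul_le_mul_of_nonneg_left (sq_le_supNorm_sq f y) (hν y)
    _ = supNorm f ^ 2 := by rw [← sum_mul, hν1, one_mul]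

end SupNormVariance

section FiberAverages

variable {α β : Type*} [Fintype β] [DecidableEq α]

/-- With `p = p_j` on `I_k`, `fiberSum p μ_k` is the projection `μ_k^{→j}` and
`propagate p μ_j μ_k` is the propagator `q_{j,k}`. -/
def fiberSum (p : β → α) (w : β → ℝ) (x : α) : ℝ := ∑ y, if p y = x then w y else 0

noncomputable def propagate (p : β → α) (μ : α → ℝ) (ν : β → ℝ) (f : β → ℝ) (x : α) : ℝ :=
  fiberSum p (fun y => f y * ν y) x / μ x

theorem fiberSum_nonneg (p : β → α) {w : β → ℝ} (hw : 0 ≤ w) (x : α) : 0 ≤ fiberSum p w x :=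
  sum_nonneg fun y _ => by
    split_ifs
    exacts [hw y, le_rfl]

theorem sum_fiberSum [Fintype α] (p : β → α) (w : β → ℝ) :
    ∑ x, fiberSum p w x = ∑ y, w y := by
  unfold fiberSum
  rw [sum_comm]
  simp only [sum_ite_eq, mem_univ, if_true]

noncomputable def maxFiberRatio [Fintype α] [Nonempty α] (p : β → α) (μ : α → ℝ) (ν : β → ℝ) : ℝ :=
  univ.sup' univ_nonempty fun x => fiberSum p ν x / μ x

theorem fiberRatio_le_maxFiberRatio [Fintype α] [Nonempty α] (p : β → α) (μ : α → ℝ)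
    (ν : β → ℝ) (x : α) : fiberSum p ν x / μ x ≤ maxFiberRatio p μ ν :=
  le_sup' (fun x => fiberSum p ν x / μ x) (mem_univ x)

theorem maxFiberRatio_nonneg [Fintype α] [Nonempty α] (p : β → α) {μ : α → ℝ}
    (hμ : ∀ x, 0 < μ x) {ν : β → ℝ} (hν : 0 ≤ ν) : 0 ≤ maxFiberRatio p μ ν :=
  have x := Classical.arbitrary α
  (div_nonneg (fiberSum_nonneg p hν x) (hμ x).le).trans (fiberRatio_le_maxFiberRatio p μ ν x)

variable [Nonempty β]

theorem abs_fiberSum_mul_le (p : β → α) {ν : β → ℝ} (hν : 0 ≤ ν) (f : β → ℝ) (x : α) :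
    |fiberSum p (fun y => f y * ν y) x| ≤ supNorm f * fiberSum p ν x := by
  refine (abs_sum_le_sum_abs _ _).trans ?_
  rw [fiberSum, mul_sum]
  refine sum_le_sum fun y _ => ?_
  split_ifs
  · rw [abs_mul, abs_of_nonneg (hν y)]
    exact mul_le_mul_of_nonneg_right (abs_le_supNorm f y) (hν y)
  · simp

theorem abs_propagate_le_mul_fiberRatio (p : β → α) {μ : α → ℝ} (hμ : ∀ x, 0 < μ x)
    {ν : β → ℝ} (hν : 0 ≤ ν) (f : β → ℝ) (x : α) :
    |propagate p μ ν f x| ≤ supNorm f * (fiberSum p ν x / μ x) := by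
  rw [propagate, abs_div, abs_of_pos (hμ x), mul_div_assoc']
  exact div_le_div_of_nonneg_right (abs_fiberSum_mul_le p hν f x) (hμ x).le

variable [Fintype α] [Nonempty α]

theorem abs_propagate_le (p : β → α) {μ : α → ℝ} (hμ : ∀ x, 0 < μ x)
    {ν : β → ℝ} (hν : 0 ≤ ν) (f : β → ℝ) (x : α) :
    |propagate p μ ν f x| ≤ maxFiberRatio p μ ν * supNorm f :=
  calc |propagate p μ ν f x| ≤ supNorm f * (fiberSum p ν x / μ x) :=
        abs_propagate_le_mul_fiberRatio p hμ hν f x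
    _ ≤ supNorm f * maxFiberRatio p μ ν :=
        mul_le_mul_of_nonneg_left (fiberRatio_le_maxFiberRatio p μ ν x) (supNorm_nonneg f)
    _ = maxFiberRatio p μ ν * supNorm f := mul_comm _ _

theorem supNorm_propagate_le (p : β → α) {μ : α → ℝ} (hμ : ∀ x, 0 < μ x)
    {ν : β → ℝ} (hν : 0 ≤ ν) (f : β → ℝ) :
    supNorm (propagate p μ ν f) ≤ maxFiberRatio p μ ν * supNorm f :=
  sup'_le _ _ fun x _ => abs_propagate_le p hμ hν f x

theorem supNorm_sq_propagate_le (p : β → α) {μ : α → ℝ} (hμ : ∀ x, 0 < μ x)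
    {ν : β → ℝ} (hν : 0 ≤ ν) (f : β → ℝ) :
    supNorm (fun x => propagate p μ ν f x ^ 2) ≤ maxFiberRatio p μ ν ^ 2 * supNorm f ^ 2 :=
  sup'_le _ _ fun x _ => by
    show |propagate p μ ν f x ^ 2| ≤ _
    rw [abs_pow, ← mul_pow]
    exact pow_le_pow_left₀ (abs_nonneg _) (abs_propagate_le p hμ hν f x) 2

theorem sum_mul_propagate_sq_le (p : β → α) {μ : α → ℝ} (hμ : ∀ x, 0 < μ x)
    {ν : β → ℝ} (hν : 0 ≤ ν) (hν1 : ∑ y, ν y = 1) (f : β → ℝ) :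
    ∑ x, μ x * propagate p μ ν f x ^ 2 ≤ maxFiberRatio p μ ν * supNorm f ^ 2 := by
  set M := maxFiberRatio p μ ν
  have hterm (x : α) : μ x * propagate p μ ν f x ^ 2 ≤ M * supNorm f ^ 2 * fiberSum p ν x := by
    have hsq : propagate p μ ν f x ^ 2 ≤ (M * supNorm f) * (supNorm f * (fiberSum p ν x / μ x)) := by
      rw [← sq_abs, sq]
      exact mul_le_mul (abs_propagate_le p hμ hν f x) (abs_propagate_le_mul_fiberRatio p hμ hν f x)
        (abs_nonneg _) (mul_nonneg (maxFiberRatio_nonneg p hμ hν) (supNorm_nonneg f))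
    calc μ x * propagate p μ ν f x ^ 2
        ≤ μ x * ((M * supNorm f) * (supNorm f * (fiberSum p ν x / μ x))) :=
          mul_le_mul_of_nonneg_left hsq (hμ x).le
      _ = M * supNorm f ^ 2 * fiberSum p ν x := by field_simp [(hμ x).ne']
  calc ∑ x, μ x * propagate p μ ν f x ^ 2 ≤ ∑ x, M * supNorm f ^ 2 * fiberSum p ν x :=
        sum_le_sum fun x _ => hterm x
    _ = M * supNorm f ^ 2 := by rw [← mul_sum, sum_fiberSum, hν1, mul_one]

theorem finVariance_propagate_le (p : β → α) {μ : α → ℝ} (hμ : ∀ x, 0 < μ x)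
    {ν : β → ℝ} (hν : 0 ≤ ν) (hν1 : ∑ y, ν y = 1) (f : β → ℝ) :
    finVariance μ (propagate p μ ν f) ≤ maxFiberRatio p μ ν * supNorm f ^ 2 :=
  (finVariance_le_sum_mul_sq _ _).trans (sum_mul_propagate_sq_le p hμ hν hν1 f)

end FiberAverages

theorem stmt_1_general
    (n : ℕ) (I : ℕ → Type)
    [∀ k, Fintype (I k)] [∀ k, Nonempty (I k)] [∀ k, DecidableEq (I k)]
    (μ : ∀ k, I k → ℝ)
    (hμpos : ∀ k, k ≤ n → ∀ x, 0 < μ k x)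
    (hμsum : ∀ k, k ≤ n → ∑ x, μ k x = 1)
    (p : ∀ j k : ℕ, I k → I j)
    -- projection μ_k^{→j} of μ_k to I_j
    (proj : ∀ j k : ℕ, I j → ℝ)
    (hproj : ∀ (j k : ℕ) (x : I j), proj j k x = ∑ y : I k, if p j k y = x then μ k y else 0)
    -- Feynman-Kac propagator: q_{j,k}(f)(x) = μ_k(f·1_{s_k(x)})/μ_j(x) for j<k, q_{k,k}(f)=f
    (q : ∀ j k : ℕ, (I k → ℝ) → I j → ℝ)
    (hq : ∀ (j k : ℕ), j < k → ∀ (f : I k → ℝ) (x : I j),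
      q j k f x = (∑ y : I k, if p j k y = x then f y * μ k y else 0) / μ j x)
    -- the constants d_{j,k}
    (d : ℕ → ℕ → ℝ)
    (hd : ∀ j k : ℕ, j < k →
      d j k = (Finset.univ.sup' Finset.univ_nonempty fun x : I j => proj j k x / μ j x)^2) :
    (∀ j k : ℕ, j < k → k ≤ n → ∀ f : I k → ℝ,
      max (Finset.univ.sup' Finset.univ_nonempty fun x : I j => |(q j k f x)^2|)
          ((Finset.univ.sup' Finset.univ_nonempty fun x : I j => |q j k f x|)^2)
        ≤ d j k * (Finset.univ.sup' Finset.univ_nonempty fun y : I k => |f y|)^2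
      ∧ (∑ x : I j, μ j x * (q j k f x)^2) - (∑ x : I j, μ j x * q j k f x)^2
          ≤ Real.sqrt (d j k)
            * (Finset.univ.sup' Finset.univ_nonempty fun y : I k => |f y|)^2)
    ∧ (∀ k : ℕ, k ≤ n → ∀ f : I k → ℝ,
        (Finset.univ.sup' Finset.univ_nonempty fun y : I k => |f y|) ≤ 1 →
        (∑ j ∈ Finset.range k,
            ((∑ x : I j, μ j x * (q j k f x)^2) - (∑ x : I j, μ j x * q j k f x)^2))
          + ((∑ x : I k, μ k x * (f x)^2) - (∑ x : I k, μ k x * f x)^2)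
        ≤ (∑ j ∈ Finset.range k, Real.sqrt (d j k)) + 1) := by
  have hstab (j k : ℕ) (hjk : j < k) (hkn : k ≤ n) (f : I k → ℝ) :
      max (supNorm fun x => q j k f x ^ 2) (supNorm (q j k f) ^ 2) ≤ d j k * supNorm f ^ 2 ∧
        finVariance (μ j) (q j k f) ≤ Real.sqrt (d j k) * supNorm f ^ 2 := by
    have hμj := hμpos j (hjk.le.trans hkn)
    have hμk : 0 ≤ μ k := fun y => (hμpos k hkn y).le
    have hqk : q j k f = propagate (p j k) (μ j) (μ k) f := funext (hq j k hjk f)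
    have hdk : d j k = maxFiberRatio (p j k) (μ j) (μ k) ^ 2 := by
      rw [hd j k hjk, maxFiberRatio, funext (hproj j k)]; rfl
    rw [hdk, Real.sqrt_sq (maxFiberRatio_nonneg _ hμj hμk), hqk]
    refine ⟨max_le (supNorm_sq_propagate_le _ hμj hμk f) ?_,
      finVariance_propagate_le _ hμj hμk (hμsum k hkn) f⟩
    rw [← mul_pow]
    exact pow_le_pow_left₀ (supNorm_nonneg _) (supNorm_propagate_le _ hμj hμk f) 2
  refine ⟨hstab, fun k hkn f hf => add_le_add (sum_le_sum fun j hj => ?_) ?_⟩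
  · have hf2 : supNorm f ^ 2 ≤ 1 := pow_le_one₀ (supNorm_nonneg f) hf
    exact (hstab j k (mem_range.mp hj) hkn f).2.trans
      (mul_le_of_le_one_right (Real.sqrt_nonneg _) hf2)
  · exact (finVariance_le_supNorm_sq (fun y => (hμpos k hkn y).le) (hμsum k hkn) f).trans
      (pow_le_one₀ (supNorm_nonneg f) hf)

theorem stmt_1
    (n : ℕ) (I : ℕ → Type)
    [∀ k, Fintype (I k)] [∀ k, Nonempty (I k)] [∀ k, DecidableEq (I k)]
    (μ : ∀ k, I k → ℝ)
    (hμpos : ∀ k, k ≤ n → ∀ x, 0 < μ k x)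
    (hμsum : ∀ k, k ≤ n → ∑ x, μ k x = 1)
    (p : ∀ j k : ℕ, I k → I j)
    (htrans : ∀ j k l : ℕ, j < k → k < l → l ≤ n → ∀ x : I l, p j l x = p j k (p k l x))
    (hsucc : ∀ k l : ℕ, k < l → l ≤ n → ∀ x : I k, ∃ y : I l, p k l y = x)
    -- projection μ_k^{→j} of μ_k to I_j
    (proj : ∀ j k : ℕ, I j → ℝ)
    (hproj : ∀ (j k : ℕ) (x : I j), proj j k x = ∑ y : I k, if p j k y = x then μ k y else 0)
    -- Feynman-Kac propagator: q_{j,k}(f)(x) = μ_k(f·1_{s_k(x)})/μ_j(x) for j<k, q_{k,k}(f)=f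
    (q : ∀ j k : ℕ, (I k → ℝ) → I j → ℝ)
    (hq : ∀ (j k : ℕ), j < k → ∀ (f : I k → ℝ) (x : I j),
      q j k f x = (∑ y : I k, if p j k y = x then f y * μ k y else 0) / μ j x)
    (hqdiag : ∀ (k : ℕ) (f : I k → ℝ), q k k f = f)
    -- the constants d_{j,k}
    (d : ℕ → ℕ → ℝ)
    (hd : ∀ j k : ℕ, j < k →
      d j k = (Finset.univ.sup' Finset.univ_nonempty fun x : I j => proj j k x / μ j x)^2) :
    (∀ j k : ℕ, j < k → k ≤ n → ∀ f : I k → ℝ,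
      max (Finset.univ.sup' Finset.univ_nonempty fun x : I j => |(q j k f x)^2|)
          ((Finset.univ.sup' Finset.univ_nonempty fun x : I j => |q j k f x|)^2)
        ≤ d j k * (Finset.univ.sup' Finset.univ_nonempty fun y : I k => |f y|)^2
      ∧ (∑ x : I j, μ j x * (q j k f x)^2) - (∑ x : I j, μ j x * q j k f x)^2
          ≤ Real.sqrt (d j k)
            * (Finset.univ.sup' Finset.univ_nonempty fun y : I k => |f y|)^2)
    ∧ (∀ k : ℕ, k ≤ n → ∀ f : I k → ℝ,
        (Finset.univ.sup' Finset.univ_nonempty fun y : I k => |f y|) ≤ 1 →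
        (∑ j ∈ Finset.range k,
            ((∑ x : I j, μ j x * (q j k f x)^2) - (∑ x : I j, μ j x * q j k f x)^2))
          + ((∑ x : I k, μ k x * (f x)^2) - (∑ x : I k, μ k x * f x)^2)
        ≤ (∑ j ∈ Finset.range k, Real.sqrt (d j k)) + 1) :=
  stmt_1_general n I μ hμpos hμsum p proj hproj q hq d hd
end

section
/- In the tree model, the asymptotic variance of the constant test function f ≡ 1 satisfies, for every 0 ≤ k ≤ n: Σ_{j=0}^k Var_{μ_j}(q_{j,k}(1)) = Σ_{j=0}^k Σ_{x∈I_j} μ_k^{→j}(x)·( μ_k^{→j}(x)/μ_j(x) − 1 ), where μ_k^{→k} := μ_k. -/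
/-! For `j < k` the propagated constant `q_{j,k}(1)` is the density of the projection
`μ_k^{→j}` with respect to `μ_j`, and the variance of the density `dν/dμ` of a probability
measure `ν` is the χ²-divergence `∑ ν (dν/dμ - 1)`. The `j = k` terms vanish on both sides. -/

open Finset

theorem sum_mul_div_sq_sub_sq_sum_mul_div {α 𝕜 : Type*} [Fintype α] [Field 𝕜]
    (μ ν : α → 𝕜) (hμ : ∀ x, μ x ≠ 0) (hν : ∑ x, ν x = 1) :
    ∑ x, μ x * (ν x / μ x) ^ 2 - (∑ x, μ x * (ν x / μ x)) ^ 2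
      = ∑ x, ν x * (ν x / μ x - 1) := by
  have hmean : ∑ x, μ x * (ν x / μ x) = 1 := by
    simp_rw [mul_div_cancel₀ _ (hμ _)]
    exact hν
  have hsq : ∀ x, μ x * (ν x / μ x) ^ 2 = ν x * (ν x / μ x - 1) + ν x := by
    intro x
    field_simp [hμ x]
    ring
  simp_rw [hmean, hsq, sum_add_distrib, hν]
  ring

theorem sum_fiber_ite_eq {α β M : Type*} [Fintype α] [Fintype β] [DecidableEq α]
    [AddCommMonoid M] (p : β → α) (g : β → M) :
    ∑ x, ∑ y, (if p y = x then g y else 0) = ∑ y, g y := by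
  rw [sum_comm]
  simp

theorem stmt_2_general
    (n : ℕ) (I : ℕ → Type)
    [∀ k, Fintype (I k)] [∀ k, DecidableEq (I k)]
    (μ : ∀ k, I k → ℝ)
    (hμpos : ∀ k, k ≤ n → ∀ x, 0 < μ k x)
    (hμsum : ∀ k, k ≤ n → ∑ x, μ k x = 1)
    (p : ∀ j k : ℕ, I k → I j)
    (proj : ∀ j k : ℕ, I j → ℝ)
    (hproj : ∀ (j k : ℕ) (x : I j), proj j k x = ∑ y : I k, if p j k y = x then μ k y else 0)
    (q : ∀ j k : ℕ, (I k → ℝ) → I j → ℝ)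
    (hq : ∀ (j k : ℕ), j < k → ∀ (f : I k → ℝ) (x : I j),
      q j k f x = (∑ y : I k, if p j k y = x then f y * μ k y else 0) / μ j x) :
    ∀ k : ℕ, k ≤ n →
      (∑ j ∈ Finset.range k,
          ((∑ x : I j, μ j x * (q j k (fun _ => (1:ℝ)) x)^2)
            - (∑ x : I j, μ j x * q j k (fun _ => (1:ℝ)) x)^2))
        + ((∑ x : I k, μ k x * ((1:ℝ))^2) - (∑ x : I k, μ k x * (1:ℝ))^2)
      = (∑ j ∈ Finset.range k, ∑ x : I j, proj j k x * (proj j k x / μ j x - 1))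
        + (∑ x : I k, μ k x * (μ k x / μ k x - 1)) := by
  intro k hk
  have hq_one : ∀ j < k, q j k (fun _ => 1) = fun x => proj j k x / μ j x := by
    intro j hj
    funext x
    simp [hq j k hj, hproj]
  have hproj_sum : ∀ j, ∑ x, proj j k x = 1 := by
    intro j
    simp_rw [hproj, sum_fiber_ite_eq, hμsum k hk]
  have hlast : ∀ x : I k, μ k x * (μ k x / μ k x - 1) = 0 := by
    intro x
    rw [div_self (hμpos k hk x).ne', sub_self, mul_zero]
  congr 1
  · refine sum_congr rfl fun j hj => ?_
    have hjk := mem_range.mp hj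
    rw [hq_one j hjk]
    exact sum_mul_div_sq_sub_sq_sum_mul_div _ _
      (fun x => (hμpos j (hjk.le.trans hk) x).ne') (hproj_sum j)
  · simp [hlast, hμsum k hk]

theorem stmt_2
    (n : ℕ) (I : ℕ → Type)
    [∀ k, Fintype (I k)] [∀ k, Nonempty (I k)] [∀ k, DecidableEq (I k)]
    (μ : ∀ k, I k → ℝ)
    (hμpos : ∀ k, k ≤ n → ∀ x, 0 < μ k x)
    (hμsum : ∀ k, k ≤ n → ∑ x, μ k x = 1)
    (p : ∀ j k : ℕ, I k → I j)
    (htrans : ∀ j k l : ℕ, j < k → k < l → l ≤ n → ∀ x : I l, p j l x = p j k (p k l x))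
    (hsucc : ∀ k l : ℕ, k < l → l ≤ n → ∀ x : I k, ∃ y : I l, p k l y = x)
    (proj : ∀ j k : ℕ, I j → ℝ)
    (hproj : ∀ (j k : ℕ) (x : I j), proj j k x = ∑ y : I k, if p j k y = x then μ k y else 0)
    (q : ∀ j k : ℕ, (I k → ℝ) → I j → ℝ)
    (hq : ∀ (j k : ℕ), j < k → ∀ (f : I k → ℝ) (x : I j),
      q j k f x = (∑ y : I k, if p j k y = x then f y * μ k y else 0) / μ j x)
    (hqdiag : ∀ (k : ℕ) (f : I k → ℝ), q k k f = f) :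
    ∀ k : ℕ, k ≤ n →
      (∑ j ∈ Finset.range k,
          ((∑ x : I j, μ j x * (q j k (fun _ => (1:ℝ)) x)^2)
            - (∑ x : I j, μ j x * q j k (fun _ => (1:ℝ)) x)^2))
        + ((∑ x : I k, μ k x * ((1:ℝ))^2) - (∑ x : I k, μ k x * (1:ℝ))^2)
      = (∑ j ∈ Finset.range k, ∑ x : I j, proj j k x * (proj j k x / μ j x - 1))
        + (∑ x : I k, μ k x * (μ k x / μ k x - 1)) :=
  stmt_2_general n I μ hμpos hμsum p proj hproj q hq
end

section
/- In the tree model, for all 0 ≤ j < k ≤ n and every f : I_k → ℝ one has the variance bound Var_{μ_j}(q_{j,k}(f)) ≤ d̃_{j,k}·‖f‖_k², where d̃_{j,k} = Σ_{x∈I_j} μ_k^{→j}(x)²/μ_j(x). -/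
/-! Dropping the squared mean, the variance is at most the second moment. The numerator
`μ_k(f·1_{s_k(x)})` of `q_{j,k}(f)(x)` is at most `‖f‖_k μ_k^{→j}(x)` in absolute value, so
`μ_j(x) q_{j,k}(f)(x)² ≤ μ_k^{→j}(x)² ‖f‖_k² / μ_j(x)`; summing over `x ∈ I_j` gives the bound. -/

open Finset

lemma abs_sum_mul_le_mul_sum {β : Type*} {s : Finset β} {f ν : β → ℝ} {M : ℝ}
    (hν : ∀ y ∈ s, 0 ≤ ν y) (hf : ∀ y ∈ s, |f y| ≤ M) :
    |∑ y ∈ s, f y * ν y| ≤ M * ∑ y ∈ s, ν y :=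
  calc |∑ y ∈ s, f y * ν y| ≤ ∑ y ∈ s, |f y * ν y| := abs_sum_le_sum_abs _ _
    _ ≤ ∑ y ∈ s, M * ν y := sum_le_sum fun y hy => by
        rw [abs_mul, abs_of_nonneg (hν y hy)]
        exact mul_le_mul_of_nonneg_right (hf y hy) (hν y hy)
    _ = M * ∑ y ∈ s, ν y := (mul_sum _ _ _).symm

lemma abs_sum_fiber_mul_le {α β : Type*} [Fintype β] [DecidableEq α] (π : β → α)
    {f ν : β → ℝ} {M : ℝ} (hν : ∀ y, 0 ≤ ν y) (hf : ∀ y, |f y| ≤ M) (x : α) :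
    |∑ y, if π y = x then f y * ν y else 0| ≤ M * ∑ y, if π y = x then ν y else 0 := by
  simp only [← sum_filter]
  exact abs_sum_mul_le_mul_sum (fun y _ => hν y) (fun y _ => hf y)

lemma mul_div_sq_le {w S P M : ℝ} (hw : 0 < w) (hS : |S| ≤ M * P) :
    w * (S / w) ^ 2 ≤ P ^ 2 / w * M ^ 2 := by
  have hS2 : S ^ 2 ≤ (M * P) ^ 2 := sq_abs S ▸ pow_le_pow_left₀ (abs_nonneg S) hS 2
  calc w * (S / w) ^ 2 = S ^ 2 / w := by field_simp
    _ ≤ (M * P) ^ 2 / w := div_le_div_of_nonneg_right hS2 hw.le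
    _ = P ^ 2 / w * M ^ 2 := by ring

theorem sum_mul_sq_fiber_div_le {α β : Type*} [Fintype α] [Fintype β] [DecidableEq α]
    (π : β → α) {w : α → ℝ} {ν f : β → ℝ} {M : ℝ} (hw : ∀ x, 0 < w x) (hν : ∀ y, 0 ≤ ν y)
    (hf : ∀ y, |f y| ≤ M) :
    ∑ x, w x * ((∑ y, if π y = x then f y * ν y else 0) / w x) ^ 2
      ≤ (∑ x, (∑ y, if π y = x then ν y else 0) ^ 2 / w x) * M ^ 2 := by
  rw [sum_mul]
  exact sum_le_sum fun x _ => mul_div_sq_le (hw x) (abs_sum_fiber_mul_le π hν hf x)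

theorem stmt_3_general
    (n : ℕ) (I : ℕ → Type)
    [∀ k, Fintype (I k)] [∀ k, Nonempty (I k)] [∀ k, DecidableEq (I k)]
    (μ : ∀ k, I k → ℝ)
    (hμpos : ∀ k, k ≤ n → ∀ x, 0 < μ k x)
    (p : ∀ j k : ℕ, I k → I j)
    (proj : ∀ j k : ℕ, I j → ℝ)
    (hproj : ∀ (j k : ℕ) (x : I j), proj j k x = ∑ y : I k, if p j k y = x then μ k y else 0)
    (q : ∀ j k : ℕ, (I k → ℝ) → I j → ℝ)
    (hq : ∀ (j k : ℕ), j < k → ∀ (f : I k → ℝ) (x : I j),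
      q j k f x = (∑ y : I k, if p j k y = x then f y * μ k y else 0) / μ j x) :
    ∀ j k : ℕ, j < k → k ≤ n → ∀ f : I k → ℝ,
      (∑ x : I j, μ j x * (q j k f x)^2) - (∑ x : I j, μ j x * q j k f x)^2
        ≤ (∑ x : I j, (proj j k x)^2 / μ j x)
          * (Finset.univ.sup' Finset.univ_nonempty fun y : I k => |f y|)^2 := by
  intro j k hjk hkn f
  calc (∑ x : I j, μ j x * (q j k f x)^2) - (∑ x : I j, μ j x * q j k f x)^2
      ≤ ∑ x : I j, μ j x * (q j k f x)^2 := sub_le_self _ (sq_nonneg _)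
    _ ≤ _ := by
      simp only [hq j k hjk f, hproj j k]
      exact sum_mul_sq_fiber_div_le (p j k) (hμpos j (hjk.le.trans hkn))
        (fun y => (hμpos k hkn y).le) fun y => le_sup' (fun y => |f y|) (mem_univ y)

theorem stmt_3
    (n : ℕ) (I : ℕ → Type)
    [∀ k, Fintype (I k)] [∀ k, Nonempty (I k)] [∀ k, DecidableEq (I k)]
    (μ : ∀ k, I k → ℝ)
    (hμpos : ∀ k, k ≤ n → ∀ x, 0 < μ k x)
    (hμsum : ∀ k, k ≤ n → ∑ x, μ k x = 1)
    (p : ∀ j k : ℕ, I k → I j)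
    (htrans : ∀ j k l : ℕ, j < k → k < l → l ≤ n → ∀ x : I l, p j l x = p j k (p k l x))
    (hsucc : ∀ k l : ℕ, k < l → l ≤ n → ∀ x : I k, ∃ y : I l, p k l y = x)
    (proj : ∀ j k : ℕ, I j → ℝ)
    (hproj : ∀ (j k : ℕ) (x : I j), proj j k x = ∑ y : I k, if p j k y = x then μ k y else 0)
    (q : ∀ j k : ℕ, (I k → ℝ) → I j → ℝ)
    (hq : ∀ (j k : ℕ), j < k → ∀ (f : I k → ℝ) (x : I j),
      q j k f x = (∑ y : I k, if p j k y = x then f y * μ k y else 0) / μ j x) :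
    ∀ j k : ℕ, j < k → k ≤ n → ∀ f : I k → ℝ,
      (∑ x : I j, μ j x * (q j k f x)^2) - (∑ x : I j, μ j x * q j k f x)^2
        ≤ (∑ x : I j, (proj j k x)^2 / μ j x)
          * (Finset.univ.sup' Finset.univ_nonempty fun y : I k => |f y|)^2 :=
  stmt_3_general n I μ hμpos p proj hproj q hq
end

section
/- In the branching example with parameter θ > 0, for all 0 ≤ k < l ≤ n and j ∈ I_k one has q_{k,l}(1)(j) = Z_k/Z_l if j < k and q_{k,l}(1)(k) = Z_k·Z_{l−k}/Z_l. Furthermore, if θ ≥ 1 then max_{j∈I_k} q_{k,l}(1)(j) = Z_k·Z_{l−k}/Z_l. -/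
/-- Normalizing constant of the branching example: Z_k = θ^k + Σ_{j=0}^{k-1} θ^{j+1}. -/
noncomputable def Zb (θ : ℝ) (k : ℕ) : ℝ := θ^k + ∑ j ∈ Finset.range k, θ^(j+1)

/-- The measures of the branching example. -/
noncomputable def muB (θ : ℝ) (k : ℕ) (j : Fin (k+1)) : ℝ :=
  if (j:ℕ) < k then θ^((j:ℕ)+1) / Zb θ k else θ^k / Zb θ k

/-- The Feynman-Kac propagator of the branching example applied to the
constant function 1:  q_{k,l}(1)(j) = μ_l(s_l(j))/μ_k(j), where
s_l(j) = {j} for j < k and s_l(k) = {k,…,l}. -/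
noncomputable def qB (θ : ℝ) (k l : ℕ) (j : Fin (k+1)) : ℝ :=
  (∑ i : Fin (l+1), if (if (j:ℕ) < k then (i:ℕ) = (j:ℕ) else k ≤ (i:ℕ))
      then muB θ l i else 0) / muB θ k j

/-
The unnormalised weights `θ, θ², …, θ^l, θ^l` of `μ_l` are self-similar: from index `k` on they are
`θ^k` times the weights of `μ_{l-k}`. Hence the branch `{k, …, l}` carries `μ_l`-mass
`θ^k Z_{l-k} / Z_l`, while a single site `j < k` carries `θ^{j+1} / Z_l`; dividing by `μ_k(j)` gives
the two formulas. For `θ ≥ 1` we have `Z_{l-k} ≥ 1`, so the maximum is attained at `j = k`.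
-/

noncomputable def branchWeight (θ : ℝ) (l i : ℕ) : ℝ := if i < l then θ^(i+1) else θ^l

lemma muB_eq_branchWeight_div (θ : ℝ) (l : ℕ) (i : Fin (l+1)) :
    muB θ l i = branchWeight θ l i / Zb θ l :=
  (ite_div _ _ _ _).symm

lemma Zb_eq_sum_branchWeight (θ : ℝ) (m : ℕ) :
    Zb θ m = ∑ i ∈ Finset.range (m+1), branchWeight θ m i := by
  rw [Finset.sum_range_succ, Zb, add_comm]
  congr 1
  · exact Finset.sum_congr rfl fun i hi => (if_pos (Finset.mem_range.mp hi)).symm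
  · exact (if_neg (lt_irrefl m)).symm

lemma branchWeight_add (θ : ℝ) {k l : ℕ} (hkl : k ≤ l) (i : ℕ) :
    branchWeight θ l (k+i) = θ^k * branchWeight θ (l-k) i := by
  unfold branchWeight
  by_cases hi : i < l - k
  · rw [if_pos (by omega), if_pos hi, ← pow_add, add_assoc]
  · rw [if_neg (by omega), if_neg hi, ← pow_add, Nat.add_sub_cancel' hkl]

lemma sum_Ico_branchWeight (θ : ℝ) {k l : ℕ} (hkl : k ≤ l) :
    ∑ i ∈ Finset.Ico k (l+1), branchWeight θ l i = θ^k * Zb θ (l-k) := by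
  rw [Finset.sum_Ico_eq_sum_range, show l + 1 - k = l - k + 1 by omega, Zb_eq_sum_branchWeight,
    Finset.mul_sum]
  exact Finset.sum_congr rfl fun i _ => branchWeight_add θ hkl i

lemma qB_of_lt {θ : ℝ} (hθ : θ ≠ 0) {k l : ℕ} (hkl : k ≤ l) (j : Fin (k+1)) (hj : (j:ℕ) < k) :
    qB θ k l j = Zb θ k / Zb θ l := by
  have hmass : (∑ i : Fin (l+1), if (i:ℕ) = j then muB θ l i else 0)
      = θ^((j:ℕ)+1) / Zb θ l := by
    simp only [muB_eq_branchWeight_div]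
    rw [Fin.sum_univ_eq_sum_range (fun i => if i = (j:ℕ) then branchWeight θ l i / Zb θ l else 0),
      Finset.sum_ite_eq', if_pos (Finset.mem_range.mpr (by omega)), branchWeight,
      if_pos (by omega)]
  simp only [qB, if_pos hj]
  rw [hmass, muB, if_pos hj]
  exact div_div_div_cancel_left' _ _ (pow_ne_zero _ hθ)

lemma qB_of_eq {θ : ℝ} (hθ : θ ≠ 0) {k l : ℕ} (hkl : k ≤ l) (j : Fin (k+1)) (hj : (j:ℕ) = k) :
    qB θ k l j = Zb θ k * Zb θ (l - k) / Zb θ l := by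
  have hmass : (∑ i : Fin (l+1), if k ≤ (i:ℕ) then muB θ l i else 0)
      = θ^k * Zb θ (l-k) / Zb θ l := by
    simp only [muB_eq_branchWeight_div]
    rw [Fin.sum_univ_eq_sum_range (fun i => if k ≤ i then branchWeight θ l i / Zb θ l else 0),
      ← Finset.sum_filter, ← Finset.sum_div, ← sum_Ico_branchWeight θ hkl]
    congr 2
    ext i
    simp only [Finset.mem_filter, Finset.mem_range, Finset.mem_Ico]
    omega
  have hnlt : ¬ (j:ℕ) < k := by omega
  simp only [qB, if_neg hnlt]
  rw [hmass, muB, if_neg hnlt]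
  field_simp

lemma one_le_Zb {θ : ℝ} (hθ : 1 ≤ θ) (m : ℕ) : 1 ≤ Zb θ m := by
  have hsum : 0 ≤ ∑ j ∈ Finset.range m, θ^(j+1) :=
    Finset.sum_nonneg fun j _ => pow_nonneg (zero_le_one.trans hθ) _
  have := one_le_pow₀ (n := m) hθ
  rw [Zb]
  linarith

theorem stmt_6_general (θ : ℝ) (hθ : 0 < θ) (k l : ℕ) (hkl : k < l) :
    (∀ j : Fin (k+1),
      ((j:ℕ) < k → qB θ k l j = Zb θ k / Zb θ l)
      ∧ ((j:ℕ) = k → qB θ k l j = Zb θ k * Zb θ (l - k) / Zb θ l))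
    ∧ (1 ≤ θ →
        Finset.univ.sup' Finset.univ_nonempty (qB θ k l)
          = Zb θ k * Zb θ (l - k) / Zb θ l) := by
  have hvalues : ∀ j : Fin (k+1),
      ((j:ℕ) < k → qB θ k l j = Zb θ k / Zb θ l)
      ∧ ((j:ℕ) = k → qB θ k l j = Zb θ k * Zb θ (l - k) / Zb θ l) := fun j =>
    ⟨qB_of_lt hθ.ne' hkl.le j, qB_of_eq hθ.ne' hkl.le j⟩
  refine ⟨hvalues, fun hθ1 => le_antisymm ?_ ?_⟩
  · refine Finset.sup'_le _ _ fun j _ => ?_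
    rcases (Nat.lt_succ_iff.mp j.isLt).lt_or_eq with hj | hj
    · rw [(hvalues j).1 hj]
      have hZ : ∀ m, 0 ≤ Zb θ m := fun m => zero_le_one.trans (one_le_Zb hθ1 m)
      exact div_le_div_of_nonneg_right (le_mul_of_one_le_right (hZ k) (one_le_Zb hθ1 _)) (hZ l)
    · rw [(hvalues j).2 hj]
  · rw [← (hvalues (Fin.last k)).2 (Fin.val_last k)]
    exact Finset.le_sup' _ (Finset.mem_univ _)

theorem stmt_6 (θ : ℝ) (hθ : 0 < θ) (n k l : ℕ) (hkl : k < l) (hln : l ≤ n) :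
    (∀ j : Fin (k+1),
      ((j:ℕ) < k → qB θ k l j = Zb θ k / Zb θ l)
      ∧ ((j:ℕ) = k → qB θ k l j = Zb θ k * Zb θ (l - k) / Zb θ l))
    ∧ (1 ≤ θ →
        Finset.univ.sup' Finset.univ_nonempty (qB θ k l)
          = Zb θ k * Zb θ (l - k) / Zb θ l) :=
  stmt_6_general θ hθ k l hkl
end

section
/- Let θ > 1, Z_k = θ^k + Σ_{j=0}^{k−1} θ^{j+1}, and ρ(θ) = 2 + 1/(θ−1). Then for all 0 ≤ k < l one has Z_k·Z_{l−k}/Z_l ≤ min( ρ(θ)²/2 , (ρ(θ)²/(l+1))·θ^{l−1} , (l+2)²/8 , ((l+2)/2)·θ^{l−1} ). -/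
/-!
The constants obey `Z₀ = 1` and `Z_{k+1} = θ Z_k + θ`, from which one reads off
`θ^a Z_b ≤ Z_{a+b}`, `2 θ^l ≤ Z_l` for `l ≥ 1`, and the two growth bounds
`Z_k ≤ ρ θ^k` (from the closed form `(θ - 1) Z_k = (2θ - 1) θ^k - θ`) and
`Z_k ≤ (k + 1) θ^k`. A bound `Z_k ≤ c θ^k` then gives
`Z_k Z_m ≤ c θ^k Z_m ≤ c Z_{k+m}`, and two such bounds give
`Z_k Z_m ≤ c d θ^{k+m} ≤ (c d / 2) Z_{k+m}`. The four estimates follow with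
`c, d ∈ {ρ, k + 1, m + 1}`, Bernoulli's inequality `l + 1 ≤ ρ θ^{l-1}`, and AM-GM.
-/

theorem natCast_add_one_le_rho_mul_pow_pred {θ : ℝ} (hθ : 1 < θ) (l : ℕ) :
    (l : ℝ) + 1 ≤ (2 + 1 / (θ - 1)) * θ ^ (l - 1) := by
  have hθ1 : 0 < θ - 1 := sub_pos.mpr hθ
  have hinv_pos : 0 < 1 / (θ - 1) := by positivity
  cases l with
  | zero => simp only [CharP.cast_eq_zero, zero_tsub, pow_zero]; linarith
  | succ n =>
    have hbern := one_add_mul_sub_le_pow (by linarith : (-1 : ℝ) ≤ θ) n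
    have hinv : (θ - 1) * (1 / (θ - 1)) = 1 := by field_simp
    rw [Nat.add_sub_cancel]
    push_cast
    nlinarith [mul_le_mul_of_nonneg_left hbern hinv_pos.le]

namespace Zb

variable {θ : ℝ} {k m : ℕ}

@[simp]
theorem zero (θ : ℝ) : Zb θ 0 = 1 := by
  simp [Zb]

theorem succ (θ : ℝ) (k : ℕ) : Zb θ (k + 1) = θ * Zb θ k + θ := by
  simp only [Zb, Finset.sum_range_succ', mul_add, Finset.mul_sum, ← pow_succ']
  ring

theorem mul_sub_one (θ : ℝ) (k : ℕ) : Zb θ k * (θ - 1) = (2 * θ - 1) * θ ^ k - θ := by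
  induction k with
  | zero => simp only [zero, pow_zero]; ring
  | succ k ih => rw [succ, pow_succ]; linear_combination θ * ih

theorem pos (hθ : 0 < θ) (k : ℕ) : 0 < Zb θ k := by
  induction k with
  | zero => simp
  | succ k ih => rw [succ]; positivity

theorem pow_mul_le (hθ : 0 ≤ θ) (a b : ℕ) : θ ^ a * Zb θ b ≤ Zb θ (a + b) := by
  induction a with
  | zero => simp
  | succ a ih =>
    rw [Nat.succ_add, succ, pow_succ', mul_assoc]
    nlinarith [mul_le_mul_of_nonneg_left ih hθ]

theorem two_mul_pow_le (hθ : 0 ≤ θ) {l : ℕ} (hl : l ≠ 0) : 2 * θ ^ l ≤ Zb θ l := by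
  induction l with
  | zero => exact absurd rfl hl
  | succ l ih =>
    rcases eq_or_ne l 0 with rfl | hl'
    · simp only [succ, zero, zero_add, pow_one]; linarith
    · rw [succ, pow_succ']
      nlinarith [mul_le_mul_of_nonneg_left (ih hl') hθ]

theorem le_rho_mul_pow (hθ : 1 < θ) (k : ℕ) : Zb θ k ≤ (2 + 1 / (θ - 1)) * θ ^ k := by
  have hθ1 : 0 < θ - 1 := sub_pos.mpr hθ
  rw [← mul_le_mul_iff_of_pos_right hθ1, mul_sub_one]
  have : (2 + 1 / (θ - 1)) * θ ^ k * (θ - 1) = (2 * θ - 1) * θ ^ k := by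
    field_simp; ring
  linarith

theorem le_succ_mul_pow (hθ : 1 ≤ θ) (k : ℕ) : Zb θ k ≤ ((k : ℝ) + 1) * θ ^ k := by
  induction k with
  | zero => simp
  | succ k ih =>
    rw [succ, pow_succ']
    have hθk : θ ≤ θ * θ ^ k := le_mul_of_one_le_right (by linarith) (one_le_pow₀ hθ)
    push_cast
    nlinarith [mul_le_mul_of_nonneg_left ih (by linarith : (0 : ℝ) ≤ θ)]

theorem mul_le_of_le_mul_pow (hθ : 0 < θ) {c : ℝ} (hc : Zb θ k ≤ c * θ ^ k) :
    Zb θ k * Zb θ m ≤ c * Zb θ (k + m) := by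
  have hc0 : 0 ≤ c := by
    have := (pos hθ k).trans_le hc
    exact (pos_of_mul_pos_left this (pow_pos hθ k).le).le
  calc Zb θ k * Zb θ m ≤ c * θ ^ k * Zb θ m :=
        mul_le_mul_of_nonneg_right hc (pos hθ m).le
    _ = c * (θ ^ k * Zb θ m) := mul_assoc _ _ _
    _ ≤ c * Zb θ (k + m) := mul_le_mul_of_nonneg_left (pow_mul_le hθ.le k m) hc0

theorem mul_le_half_mul_of_le_mul_pow (hθ : 0 < θ) (hkm : k + m ≠ 0) {c d : ℝ}
    (hc : Zb θ k ≤ c * θ ^ k) (hd : Zb θ m ≤ d * θ ^ m) :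
    Zb θ k * Zb θ m ≤ c * d / 2 * Zb θ (k + m) := by
  have hprod : Zb θ k * Zb θ m ≤ c * d * θ ^ (k + m) := by
    calc Zb θ k * Zb θ m ≤ c * θ ^ k * (d * θ ^ m) :=
          mul_le_mul hc hd (pos hθ m).le ((pos hθ k).le.trans hc)
      _ = c * d * θ ^ (k + m) := by ring
  have hcd : 0 ≤ c * d := by
    have := (mul_pos (pos hθ k) (pos hθ m)).le.trans hprod
    exact nonneg_of_mul_nonneg_left this (pow_pos hθ _)
  nlinarith [mul_le_mul_of_nonneg_left (two_mul_pow_le hθ.le hkm) hcd]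

theorem mul_div_le_rho_sq_div_two (hθ : 1 < θ) (hkm : k + m ≠ 0) :
    Zb θ k * Zb θ m / Zb θ (k + m) ≤ (2 + 1 / (θ - 1)) ^ 2 / 2 := by
  rw [div_le_iff₀ (pos (by linarith) _), sq]
  exact mul_le_half_mul_of_le_mul_pow (by linarith) hkm (le_rho_mul_pow hθ k)
    (le_rho_mul_pow hθ m)

theorem mul_div_le_rho_sq_div_succ_mul_pow_pred (hθ : 1 < θ) :
    Zb θ k * Zb θ m / Zb θ (k + m)
      ≤ (2 + 1 / (θ - 1)) ^ 2 / (((k + m : ℕ) : ℝ) + 1) * θ ^ (k + m - 1) := by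
  set ρ := 2 + 1 / (θ - 1)
  have hρ : 0 < ρ := by have : 0 < 1 / (θ - 1) := one_div_pos.mpr (by linarith); positivity
  have hρ_le : ρ ≤ ρ ^ 2 / (((k + m : ℕ) : ℝ) + 1) * θ ^ (k + m - 1) := by
    rw [div_mul_eq_mul_div, le_div_iff₀ (by positivity), sq, mul_assoc]
    exact mul_le_mul_of_nonneg_left (natCast_add_one_le_rho_mul_pow_pred hθ _) hρ.le
  rw [div_le_iff₀ (pos (by linarith) _)]
  exact (mul_le_of_le_mul_pow (by linarith) (le_rho_mul_pow hθ k)).trans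
    (mul_le_mul_of_nonneg_right hρ_le (pos (by linarith) _).le)

theorem mul_div_le_add_two_sq_div_eight (hθ : 1 ≤ θ) (hkm : k + m ≠ 0) :
    Zb θ k * Zb θ m / Zb θ (k + m) ≤ (((k + m : ℕ) : ℝ) + 2) ^ 2 / 8 := by
  have hZ := pos (by linarith : 0 < θ) (k + m)
  rw [div_le_iff₀ hZ]
  refine (mul_le_half_mul_of_le_mul_pow (by linarith) hkm (le_succ_mul_pow hθ k)
    (le_succ_mul_pow hθ m)).trans (mul_le_mul_of_nonneg_right ?_ hZ.le)
  push_cast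
  nlinarith [sq_nonneg ((k : ℝ) - m)]

theorem mul_div_le_add_two_div_two_mul_pow_pred (hθ : 1 ≤ θ) :
    Zb θ k * Zb θ m / Zb θ (k + m) ≤ (((k + m : ℕ) : ℝ) + 2) / 2 * θ ^ (k + m - 1) := by
  wlog hle : k ≤ m generalizing k m
  · rw [mul_comm, add_comm k m]
    exact this (by omega)
  have hZ := pos (by linarith : 0 < θ) (k + m)
  have hk : ((k : ℝ) + 1) ≤ (((k + m : ℕ) : ℝ) + 2) / 2 := by
    have : (k : ℝ) ≤ m := by exact_mod_cast hle
    push_cast; linarith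
  rw [div_le_iff₀ hZ]
  calc Zb θ k * Zb θ m ≤ ((k : ℝ) + 1) * Zb θ (k + m) :=
        mul_le_of_le_mul_pow (by linarith) (le_succ_mul_pow hθ k)
    _ ≤ (((k + m : ℕ) : ℝ) + 2) / 2 * θ ^ (k + m - 1) * Zb θ (k + m) := by
        gcongr
        exact hk.trans (le_mul_of_one_le_right (by positivity) (one_le_pow₀ hθ))

end Zb

theorem stmt_8 (θ : ℝ) (hθ : 1 < θ) (k l : ℕ) (hkl : k < l) :
    Zb θ k * Zb θ (l - k) / Zb θ l
      ≤ min (min ((2 + 1/(θ-1))^2 / 2)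
               ((2 + 1/(θ-1))^2 / ((l:ℝ)+1) * θ^(l-1)))
            (min (((l:ℝ)+2)^2 / 8)
               ((((l:ℝ)+2) / 2) * θ^(l-1))) := by
  obtain ⟨m, rfl⟩ := Nat.exists_eq_add_of_le hkl.le
  have hkm : k + m ≠ 0 := by omega
  rw [Nat.add_sub_cancel_left]
  exact le_min
    (le_min (Zb.mul_div_le_rho_sq_div_two hθ hkm) (Zb.mul_div_le_rho_sq_div_succ_mul_pow_pred hθ))
    (le_min (Zb.mul_div_le_add_two_sq_div_eight hθ.le hkm)
      (Zb.mul_div_le_add_two_div_two_mul_pow_pred hθ.le))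
end

section
/- In the branching example with θ = 1 (so that μ_j is the uniform distribution on I_j = {0,…,j}), the asymptotic variance of the constant test function satisfies Σ_{j=0}^n Var_{μ_j}(q_{j,n}(1)) = n²(n−1)/(12(n+1)). Equivalently, Σ_{j=0}^n [ −1 + ((j+1)/(n+1)²)·( j + (n−j+1)² ) ] = n²(n−1)/(12(n+1)). -/
/-- The propagator q_{j,n}(1)(x) = μ_n^{→j}(x)/μ_j(x) of the branching example
at θ = 1: μ_j is uniform on {0,…,j}, and the projection of μ_n to I_j is
μ_n^{→j}(x) = (n-j+1)/(n+1) if x = j and 1/(n+1) if x < j. -/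
noncomputable def qTheta1 (n j : ℕ) (x : Fin (j+1)) : ℝ :=
  (if (x:ℕ) = j then ((n:ℝ)-(j:ℝ)+1)/((n:ℝ)+1) else 1/((n:ℝ)+1)) / (1/((j:ℝ)+1))

/-! Since `q_{j,n}(1)` is a density ratio it has mean `1` under `μ_j`, and it takes only two
values, so `Var_{μ_j}(q_{j,n}(1)) = j (n - j)² / (n + 1)²`. Summing this over `j` reduces the
theorem to the classical identity `∑_{j ≤ n} j (n - j)² = n² (n² - 1) / 12`, which follows from
the power sums `∑ j`, `∑ j²`, `∑ j³`. -/

open Finset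

section PowerSums

variable {R : Type*} [CommRing R]

theorem sum_range_cast_mul_two (m : ℕ) : (∑ j ∈ range m, (j : R)) * 2 = m * (m - 1) := by
  induction m with
  | zero => simp
  | succ k ih => rw [sum_range_succ, add_mul, ih]; push_cast; ring

theorem sum_range_cast_sq_mul_six (m : ℕ) :
    (∑ j ∈ range m, (j : R) ^ 2) * 6 = m * (m - 1) * (2 * m - 1) := by
  induction m with
  | zero => simp
  | succ k ih => rw [sum_range_succ, add_mul, ih]; push_cast; ring

theorem sum_range_cast_cube_mul_four (m : ℕ) :
    (∑ j ∈ range m, (j : R) ^ 3) * 4 = (m * (m - 1)) ^ 2 := by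
  induction m with
  | zero => simp
  | succ k ih => rw [sum_range_succ, add_mul, ih]; push_cast; ring

theorem sum_range_succ_mul_sub_sq_mul_twelve (n : ℕ) :
    (∑ j ∈ range (n + 1), (j : R) * (n - j) ^ 2) * 12 = n ^ 2 * (n ^ 2 - 1) := by
  have hexpand : ∑ j ∈ range (n + 1), (j : R) * (n - j) ^ 2
      = ∑ j ∈ range (n + 1), (j : R) ^ 3 - 2 * n * ∑ j ∈ range (n + 1), (j : R) ^ 2
        + n ^ 2 * ∑ j ∈ range (n + 1), (j : R) := by
    rw [mul_sum, mul_sum, ← sum_sub_distrib, ← sum_add_distrib]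
    exact sum_congr rfl fun j _ => by ring
  have h1 := sum_range_cast_mul_two (R := R) (n + 1)
  have h2 := sum_range_cast_sq_mul_six (R := R) (n + 1)
  have h3 := sum_range_cast_cube_mul_four (R := R) (n + 1)
  push_cast at h1 h2 h3
  rw [hexpand]
  linear_combination 3 * h3 - 4 * (n : R) * h2 + 6 * (n : R) ^ 2 * h1

end PowerSums

theorem Fin.sum_univ_eq_nsmul_add_last {M : Type*} [AddCommMonoid M] {j : ℕ}
    (f : Fin (j + 1) → M) {b : M} (hf : ∀ x : Fin j, f x.castSucc = b) :
    ∑ x, f x = j • b + f (Fin.last j) := by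
  simp [Fin.sum_univ_castSucc, hf]

section Propagator

variable (n j : ℕ)

theorem qTheta1_castSucc (x : Fin j) : qTheta1 n j x.castSucc = (j + 1) / (n + 1) := by
  rw [qTheta1, Fin.val_castSucc, if_neg x.isLt.ne]
  field_simp

theorem qTheta1_last : qTheta1 n j (Fin.last j) = (j + 1) * (n - j + 1) / (n + 1) := by
  rw [qTheta1, Fin.val_last, if_pos rfl]
  field_simp

theorem sum_uniform_mul_qTheta1 : ∑ x : Fin (j + 1), 1 / ((j : ℝ) + 1) * qTheta1 n j x = 1 := by
  rw [Fin.sum_univ_eq_nsmul_add_last _ fun x => by rw [qTheta1_castSucc], qTheta1_last,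
    nsmul_eq_mul]
  field_simp
  ring

theorem sum_uniform_mul_qTheta1_sq :
    ∑ x : Fin (j + 1), 1 / ((j : ℝ) + 1) * qTheta1 n j x ^ 2
      = ((j : ℝ) + 1) / ((n : ℝ) + 1) ^ 2 * ((j : ℝ) + ((n : ℝ) - j + 1) ^ 2) := by
  rw [Fin.sum_univ_eq_nsmul_add_last _ fun x => by rw [qTheta1_castSucc], qTheta1_last,
    nsmul_eq_mul]
  field_simp

theorem neg_one_add_second_moment_eq :
    -1 + ((j : ℝ) + 1) / ((n : ℝ) + 1) ^ 2 * ((j : ℝ) + ((n : ℝ) - j + 1) ^ 2)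
      = j * (n - j) ^ 2 / ((n : ℝ) + 1) ^ 2 := by
  field_simp
  ring

end Propagator

theorem sum_range_succ_neg_one_add_second_moment (n : ℕ) :
    ∑ j ∈ range (n + 1), (-1 + ((j : ℝ) + 1) / ((n : ℝ) + 1) ^ 2 * ((j : ℝ) + ((n : ℝ) - j + 1) ^ 2))
      = (n : ℝ) ^ 2 * ((n : ℝ) - 1) / (12 * ((n : ℝ) + 1)) := by
  have h := sum_range_succ_mul_sub_sq_mul_twelve (R := ℝ) n
  simp_rw [neg_one_add_second_moment_eq, ← sum_div]
  field_simp
  linear_combination h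

theorem stmt_9 (n : ℕ) :
    (∑ j ∈ Finset.range (n+1),
        ((∑ x : Fin (j+1), (1/((j:ℝ)+1)) * (qTheta1 n j x)^2)
          - (∑ x : Fin (j+1), (1/((j:ℝ)+1)) * qTheta1 n j x)^2))
      = (n:ℝ)^2 * ((n:ℝ)-1) / (12*((n:ℝ)+1))
    ∧ (∑ j ∈ Finset.range (n+1),
        (-1 + ((j:ℝ)+1)/((n:ℝ)+1)^2 * ((j:ℝ) + ((n:ℝ)-(j:ℝ)+1)^2)))
      = (n:ℝ)^2 * ((n:ℝ)-1) / (12*((n:ℝ)+1)) := by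
  have hvar : ∀ j ∈ range (n + 1),
      (∑ x : Fin (j+1), (1/((j:ℝ)+1)) * (qTheta1 n j x)^2)
        - (∑ x : Fin (j+1), (1/((j:ℝ)+1)) * qTheta1 n j x)^2
      = -1 + ((j:ℝ)+1)/((n:ℝ)+1)^2 * ((j:ℝ) + ((n:ℝ)-(j:ℝ)+1)^2) := fun j _ => by
    rw [sum_uniform_mul_qTheta1_sq, sum_uniform_mul_qTheta1]
    ring
  exact ⟨(sum_congr rfl hvar).trans (sum_range_succ_neg_one_add_second_moment n),
    sum_range_succ_neg_one_add_second_moment n⟩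
end

section
/- In the branching example with parameter θ > 0, let π_n be the probability measure on I_n = {0,…,n} given by π_n(j) = 2^{−(j+1)} for j < n and π_n(n) = 2^{−n}, let ξ¹,…,ξ^N be i.i.d. with law π_n, and let η̃_n(f) = (1/N) Σ_{i=1}^N f(ξ^i)·μ_n(ξ^i)/π_n(ξ^i) be the Sequential Importance Sampling estimator. Then for f = 1_{{n}}: E[|η̃_n(f) − μ_n(f)|²] = (2^n − 1) / ( N·( 1 + (θ/(θ−1))·(1 − θ^{−n}) )² ) if θ ≠ 1, and = (2^n − 1)/(N·(n+1)²) if θ = 1. Moreover, if θ > 2^{−1/2} then there exist constants C > 0 and ρ > 1 such that N·E[|η̃_n(f) − μ_n(f)|²] ≥ C·ρ^n for all sufficiently large n. -/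
/-- The Sequential Importance Sampling proposal distribution of the branching
example: π_n(j) = 2^{-(j+1)} for j < n and π_n(n) = 2^{-n}. -/
noncomputable def piB (n : ℕ) (j : Fin (n+1)) : ℝ :=
  if (j:ℕ) < n then (1/2:ℝ)^((j:ℕ)+1) else (1/2:ℝ)^n

/-- Mean squared error E[|η̃_n(f) - μ_n(f)|²] of the Sequential Importance
Sampling estimator for the test function f = 1_{{n}}, written as the sum over
the product space of the N i.i.d. samples with law π_n. -/
noncomputable def errSIS (θ : ℝ) (N n : ℕ) : ℝ :=
  ∑ ω : Fin N → Fin (n+1), (∏ i, piB n (ω i)) *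
    (((N:ℝ))⁻¹ * (∑ i, (if ((ω i : ℕ) = n) then (1:ℝ) else 0)
        * (muB θ n (ω i) / piB n (ω i)))
      - muB θ n (Fin.last n))^2

/-
The error is the variance of the empirical mean of N i.i.d. copies of the weight
w(ξ) = 1_{ξ = n} μ_n(n)/π_n(n), hence equals (π_n(w²) − μ_n(n)²)/N = (2^n − 1) μ_n(n)²/N,
with μ_n(n) = θ^n/Z_n. For the growth, Z_n ≤ (n+1) max(θ,1)^n gives
μ_n(n) ≥ min(θ,1)^n/(n+1), so N times the error is at least of order (2 min(θ,1)²)^n/(n+1)²,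
which grows geometrically once √2 min(θ,1) > 1.
-/

open Finset Filter

section EmpiricalMean

variable {ι α : Type*} [Fintype ι] [DecidableEq ι] [Fintype α] {p h : α → ℝ}

theorem sum_pi_prod_mul_apply_mul_apply (hp : ∑ a, p a = 1) (hh : ∑ a, p a * h a = 0)
    (i j : ι) :
    ∑ ω : ι → α, (∏ k, p (ω k)) * (h (ω i) * h (ω j))
      = if i = j then ∑ a, p a * h a ^ 2 else 0 := by
  -- the summand is a product over the coordinates, so the sum factorises
  have hfactor : ∀ ω : ι → α, (∏ k, p (ω k)) * (h (ω i) * h (ω j))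
      = ∏ k, p (ω k) * (if k = i then h (ω k) else 1) * (if k = j then h (ω k) else 1) := by
    intro ω
    rw [prod_mul_distrib, prod_mul_distrib, prod_ite_eq' univ i, prod_ite_eq' univ j]
    simp [mul_assoc]
  simp_rw [hfactor]
  rw [← Fintype.prod_sum (κ := fun _ => α)
    fun k a => p a * (if k = i then h a else 1) * (if k = j then h a else 1)]
  split_ifs with hij
  · subst hij
    rw [prod_eq_single_of_mem i (mem_univ i) fun k _ hk => by simp [hk, hp]]
    simp [sq, mul_assoc]
  · exact prod_eq_zero (mem_univ i) (by simp [hij, hh])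

theorem sum_pi_prod_mul_sum_sq (hp : ∑ a, p a = 1) (hh : ∑ a, p a * h a = 0) :
    ∑ ω : ι → α, (∏ k, p (ω k)) * (∑ i, h (ω i)) ^ 2
      = Fintype.card ι * ∑ a, p a * h a ^ 2 := by
  simp_rw [sq (∑ i, _), sum_mul_sum, mul_sum]
  rw [sum_comm]
  simp_rw [sum_comm (s := (univ : Finset (ι → α))),
    sum_pi_prod_mul_apply_mul_apply hp hh, sum_ite_eq, if_pos (mem_univ _), sum_const,
    card_univ, nsmul_eq_mul, mul_sum]

theorem sum_pi_prod_mul_mean_sub_sq {N : ℕ} (hN : N ≠ 0) {c : ℝ} (hp : ∑ a, p a = 1)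
    (hc : ∑ a, p a * h a = c) :
    ∑ ω : Fin N → α, (∏ i, p (ω i)) * ((N : ℝ)⁻¹ * ∑ i, h (ω i) - c) ^ 2
      = (∑ a, p a * h a ^ 2 - c ^ 2) / N := by
  have hNR : (N : ℝ) ≠ 0 := Nat.cast_ne_zero.mpr hN
  have hcenter : ∀ ω : Fin N → α,
      (N : ℝ)⁻¹ * ∑ i, h (ω i) - c = (N : ℝ)⁻¹ * ∑ i, (h (ω i) - c) := by
    intro ω
    rw [sum_sub_distrib, sum_const, card_univ, Fintype.card_fin, nsmul_eq_mul, mul_sub,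
      inv_mul_cancel_left₀ hNR]
  have hmean : ∑ a, p a * (h a - c) = 0 := by
    simp_rw [mul_sub, sum_sub_distrib, ← sum_mul, hc, hp, one_mul, sub_self]
  have hvar : ∑ a, p a * (h a - c) ^ 2 = ∑ a, p a * h a ^ 2 - c ^ 2 := by
    have : ∀ a, p a * (h a - c) ^ 2 = p a * h a ^ 2 - 2 * c * (p a * h a) + c ^ 2 * p a :=
      fun a => by ring
    simp_rw [this, sum_add_distrib, sum_sub_distrib, ← mul_sum, hc, hp]
    ring
  simp_rw [hcenter, mul_pow, mul_left_comm _ ((N : ℝ)⁻¹ ^ 2)]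
  rw [← mul_sum, sum_pi_prod_mul_sum_sq (h := fun a => h a - c) hp hmean, hvar,
    Fintype.card_fin]
  field_simp

end EmpiricalMean

section Branching

variable {θ : ℝ}

theorem sum_range_half_pow_succ (n : ℕ) :
    ∑ k ∈ range n, (1 / 2 : ℝ) ^ (k + 1) = 1 - (1 / 2) ^ n := by
  induction n with
  | zero => simp
  | succ n ih => rw [sum_range_succ, ih]; ring

theorem piB_last (n : ℕ) : piB n (Fin.last n) = (1 / 2) ^ n := by
  simp [piB]

theorem sum_piB (n : ℕ) : ∑ j, piB n j = 1 := by
  rw [Fin.sum_univ_castSucc, piB_last]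
  simp only [piB, Fin.val_castSucc, Fin.is_lt, if_true]
  rw [Fin.sum_univ_eq_sum_range (fun k => (1 / 2 : ℝ) ^ (k + 1)), sum_range_half_pow_succ]
  ring

theorem muB_last (n : ℕ) : muB θ n (Fin.last n) = θ ^ n / Zb θ n := by
  simp [muB]

theorem indicator_mul_muB_div_piB (n : ℕ) (j : Fin (n + 1)) :
    (if (j : ℕ) = n then (1 : ℝ) else 0) * (muB θ n j / piB n j)
      = if j = Fin.last n then 2 ^ n * muB θ n (Fin.last n) else 0 := by
  by_cases hj : j = Fin.last n
  · subst hj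
    rw [if_pos (Fin.val_last n), if_pos rfl, piB_last, one_div_pow, div_div_eq_mul_div, div_one,
      one_mul, mul_comm]
  · have hjn : (j : ℕ) ≠ n := fun h => hj (Fin.ext h)
    rw [if_neg hjn, if_neg hj, zero_mul]

theorem errSIS_eq {N : ℕ} (hN : N ≠ 0) (n : ℕ) :
    errSIS θ N n = (2 ^ n - 1) * muB θ n (Fin.last n) ^ 2 / N := by
  have hhalf : (1 / 2 : ℝ) ^ n * 2 ^ n = 1 := by rw [← mul_pow]; norm_num
  have hmean : ∑ j, piB n j * ((if (j : ℕ) = n then (1 : ℝ) else 0) * (muB θ n j / piB n j))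
      = muB θ n (Fin.last n) := by
    simp_rw [indicator_mul_muB_div_piB, mul_ite, mul_zero, sum_ite_eq', if_pos (mem_univ _),
      piB_last]
    linear_combination muB θ n (Fin.last n) * hhalf
  rw [errSIS, sum_pi_prod_mul_mean_sub_sq hN (sum_piB n) hmean]
  simp_rw [indicator_mul_muB_div_piB, ite_pow, zero_pow two_ne_zero, mul_ite, mul_zero,
    sum_ite_eq', if_pos (mem_univ _), piB_last]
  congr 1
  linear_combination 2 ^ n * muB θ n (Fin.last n) ^ 2 * hhalf

theorem Zb_eq_of_ne_one (h0 : θ ≠ 0) (h1 : θ ≠ 1) (n : ℕ) :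
    Zb θ n = θ ^ n * (1 + θ / (θ - 1) * (1 - θ ^ (-(n : ℤ)))) := by
  have hgeom : ∑ j ∈ range n, θ ^ (j + 1) = (θ ^ n - 1) / (θ - 1) * θ := by
    simp_rw [pow_succ]
    rw [← sum_mul, geom_sum_eq h1]
  have h1' : θ - 1 ≠ 0 := sub_ne_zero.mpr h1
  rw [Zb, hgeom, zpow_neg, zpow_natCast]
  field_simp

theorem Zb_one (n : ℕ) : Zb 1 n = n + 1 := by
  simp [Zb, add_comm]

theorem Zb_pos (hθ : 0 < θ) (n : ℕ) : 0 < Zb θ n := by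
  unfold Zb
  positivity

theorem Zb_le (hθ : 0 ≤ θ) (n : ℕ) : Zb θ n ≤ (n + 1) * max θ 1 ^ n := by
  have hterm : ∀ k ≤ n, θ ^ k ≤ max θ 1 ^ n := fun k hk =>
    (pow_le_pow_left₀ hθ (le_max_left θ 1) k).trans (pow_le_pow_right₀ (le_max_right θ 1) hk)
  calc Zb θ n ≤ max θ 1 ^ n + ∑ _j ∈ range n, max θ 1 ^ n :=
        add_le_add (hterm n le_rfl) (sum_le_sum fun j hj => hterm _ (mem_range.mp hj))
    _ = (n + 1) * max θ 1 ^ n := by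
        rw [sum_const, card_range, nsmul_eq_mul]
        ring

theorem min_pow_div_le_muB_last (hθ : 0 < θ) (n : ℕ) :
    min θ 1 ^ n / (n + 1) ≤ muB θ n (Fin.last n) := by
  have hM : 0 < max θ 1 ^ n := pow_pos (lt_max_of_lt_right one_pos) n
  have hθn : θ ^ n = min θ 1 ^ n * max θ 1 ^ n := by rw [← mul_pow, min_mul_max, mul_one]
  calc min θ 1 ^ n / (n + 1) = θ ^ n / ((n + 1) * max θ 1 ^ n) := by
        rw [hθn, mul_div_mul_right _ _ hM.ne']
    _ ≤ θ ^ n / Zb θ n :=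
        div_le_div_of_nonneg_left (by positivity) (Zb_pos hθ n) (Zb_le hθ.le n)
    _ = muB θ n (Fin.last n) := (muB_last n).symm

theorem errSIS_eq_of_Zb_eq (hθ : θ ≠ 0) {N : ℕ} (hN : N ≠ 0) {n : ℕ} {D : ℝ}
    (hZ : Zb θ n = θ ^ n * D) : errSIS θ N n = (2 ^ n - 1) / (N * D ^ 2) := by
  rw [errSIS_eq hN, muB_last, hZ, div_mul_cancel_left₀ (pow_ne_zero n hθ)]
  ring

end Branching

theorem eventually_sq_succ_le_pow {ρ : ℝ} (hρ : 1 < ρ) :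
    ∀ᶠ n : ℕ in atTop, ((n : ℝ) + 1) ^ 2 ≤ ρ ^ n := by
  have hρ0 : 0 < ρ := zero_lt_one.trans hρ
  have hlim := (tendsto_pow_const_div_const_pow_of_one_lt 2 hρ).comp (tendsto_add_atTop_nat 1)
  filter_upwards [hlim.eventually (ge_mem_nhds (inv_pos.mpr hρ0))] with n hn
  rw [Function.comp_apply, Nat.cast_succ, div_le_iff₀ (pow_pos hρ0 _), pow_succ' ρ n,
    inv_mul_cancel_left₀ hρ0.ne'] at hn
  exact hn

theorem exists_const_mul_pow_le_errSIS {θ : ℝ} (hθ : 1 / Real.sqrt 2 < θ) {N : ℕ}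
    (hN : N ≠ 0) :
    ∃ C > (0 : ℝ), ∃ ρ > (1 : ℝ), ∃ n₀ : ℕ, ∀ n ≥ n₀,
      C * ρ ^ n ≤ (N : ℝ) * errSIS θ N n := by
  have hsqrt : 0 < Real.sqrt 2 := by positivity
  have hθ0 : 0 < θ := lt_trans (by positivity) hθ
  have hρ : 1 < Real.sqrt 2 * min θ 1 := by
    rw [← div_lt_iff₀' hsqrt]
    exact lt_min hθ (by rw [div_lt_one hsqrt]; exact Real.one_lt_sqrt_two)
  obtain ⟨n₀, hn₀⟩ := eventually_atTop.mp (eventually_sq_succ_le_pow hρ)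
  refine ⟨1 / 2, by norm_num, _, hρ, max n₀ 1, fun n hn => ?_⟩
  have hn1 : 1 ≤ n := le_of_max_le_right hn
  have hpoly := hn₀ n (le_of_max_le_left hn)
  have htwo : (2 : ℝ) ≤ 2 ^ n := by simpa using pow_le_pow_right₀ one_le_two hn1
  have hρsq : (Real.sqrt 2 * min θ 1) ^ n * (Real.sqrt 2 * min θ 1) ^ n
      = 2 ^ n * (min θ 1 ^ n) ^ 2 := by
    rw [← mul_pow, mul_mul_mul_comm, Real.mul_self_sqrt zero_le_two, mul_pow]
    ring
  rw [errSIS_eq hN, mul_div_cancel₀ _ (Nat.cast_ne_zero.mpr hN)]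
  calc 1 / 2 * (Real.sqrt 2 * min θ 1) ^ n
      ≤ 1 / 2 * (Real.sqrt 2 * min θ 1) ^ n
          * ((Real.sqrt 2 * min θ 1) ^ n / ((n : ℝ) + 1) ^ 2) := by
        have : 1 ≤ (Real.sqrt 2 * min θ 1) ^ n / ((n : ℝ) + 1) ^ 2 := by
          rw [one_le_div (by positivity)]; exact hpoly
        nlinarith [pow_pos (zero_lt_one.trans hρ) n]
    _ = 2 ^ n / 2 * (min θ 1 ^ n / (n + 1)) ^ 2 := by
        rw [mul_assoc, mul_div_assoc', hρsq, div_pow]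
        ring
    _ ≤ (2 ^ n - 1) * muB θ n (Fin.last n) ^ 2 := by
        gcongr
        · linarith
        · linarith
        · exact min_pow_div_le_muB_last hθ0 n

theorem stmt_10 (θ : ℝ) (hθ : 0 < θ) (N : ℕ) (hN : 0 < N) :
    (θ ≠ 1 → ∀ n : ℕ, errSIS θ N n
        = ((2:ℝ)^n - 1) / ((N:ℝ) * (1 + θ/(θ-1) * (1 - θ^(-(n:ℤ))))^2))
    ∧ (θ = 1 → ∀ n : ℕ, errSIS θ N n = ((2:ℝ)^n - 1) / ((N:ℝ) * ((n:ℝ)+1)^2))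
    ∧ (1 / Real.sqrt 2 < θ → ∃ C > (0:ℝ), ∃ ρ > (1:ℝ), ∃ n₀ : ℕ, ∀ n ≥ n₀,
        C * ρ^n ≤ (N:ℝ) * errSIS θ N n) := by
  refine ⟨fun hθ1 n => errSIS_eq_of_Zb_eq hθ.ne' hN.ne' (Zb_eq_of_ne_one hθ.ne' hθ1 n),
    fun hθ1 n => ?_, fun hθ2 => exists_const_mul_pow_le_errSIS hθ2 hN.ne'⟩
  subst hθ1
  exact errSIS_eq_of_Zb_eq one_ne_zero hN.ne' (by rw [Zb_one, one_pow, one_mul])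
end

section
/- In the partition setting under Assumption (D), for all 1 ≤ j < k ≤ n, every bounded measurable f and every i ∈ I_j one has ‖q̂_{j,k}(f)‖_{j,i,1} ≤ M_{j,k}(i)·max_{l∈s_k(i)} ‖f‖_{k,l,1}, and consequently ‖q̂_{j,k}(f)‖_{j,1} ≤ A_{j,k}·‖f‖_{k,1}. -/
open MeasureTheory

variable {E : Type} [MeasurableSpace E]
variable {I : ℕ → Type} [∀ k, Fintype (I k)] [∀ k, Nonempty (I k)] [∀ k, DecidableEq (I k)]

/-- The restricted (normalized) measure μ_{k,j}: the restriction of `μ` to the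
partition element `S`, normalized to a probability measure. -/
noncomputable def muLoc (μ : Measure E) (S : Set E) : Measure E := (μ S)⁻¹ • μ.restrict S

/-- The local L_p-norm ‖f‖_{k,j,p} = μ_{k,j}(|f|^p)^{1/p}. -/
noncomputable def locNorm (ν : Measure E) (p : ℝ) (f : E → ℝ) : ℝ :=
  (∫ x, |f x| ^ p ∂ν) ^ (1/p)

/-- The norm ‖f‖_{k,p} = max_{j ∈ I_k} ‖f‖_{k,j,p}. -/
noncomputable def maxNorm (μ : ℕ → Measure E) (F : ∀ k, I k → Set E) (k : ℕ) (p : ℝ)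
    (f : E → ℝ) : ℝ :=
  Finset.univ.sup' Finset.univ_nonempty fun j : I k => locNorm (muLoc (μ k) (F k j)) p f

/-- The relative mass change m_{k,k+1}(j) = μ_{k+1}(F_j)/μ_k(F_j). -/
noncomputable def mRatio (μ : ℕ → Measure E) (F : ∀ k, I k → Set E) (k : ℕ) (j : I k) : ℝ :=
  (μ (k+1) (F k j)).toReal / (μ k (F k j)).toReal

/-- The successor set s_k(i) = {l ∈ I_k | p_j(l) = i} of i ∈ I_j. -/
def succSet (p : ∀ j k : ℕ, I k → I j) (j k : ℕ) (i : I j) : Finset (I k) :=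
  Finset.univ.filter fun l => p j k l = i

/-- The product Π_{r=j}^{k-1} m_{r,r+1}(p_r(l)) of relative mass changes along
the branch leading to l ∈ I_k; its maximum over l ∈ s_k(i) is M_{j,k}(i). -/
noncomputable def Mprod (μ : ℕ → Measure E) (F : ∀ k, I k → Set E) (p : ∀ j k : ℕ, I k → I j)
    (j k : ℕ) (l : I k) : ℝ :=
  ∏ r ∈ Finset.Ico j k, mRatio μ F r (p r k l)

/-- The propagator q_{j,k}(f) = ḡ_{j,j+1}·q̂_{j+1,k}(K_k(f)). -/
noncomputable def qFull (μ : ℕ → Measure E) (g : ℕ → E → ℝ) (K : ℕ → E → Measure E)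
    (qhat : ℕ → ℕ → (E → ℝ) → E → ℝ) (j k : ℕ) (f : E → ℝ) : E → ℝ :=
  fun x => (g j x / (∫ z, g j z ∂(μ j))) * qhat (j+1) k (fun y => ∫ z, f z ∂(K k y)) x

/-- The constant δ(2^r) = Π_{t=1}^{r} γ^{1-2^{-(t-1)}}/(1-α·γ^{2^t-2})^{2^{-t}}. -/
noncomputable def deltaP (α γ : ℝ) (r : ℕ) : ℝ :=
  ∏ t ∈ Finset.Icc 1 r,
    γ ^ (1 - (2:ℝ) ^ (1 - (t:ℝ))) / (1 - α * γ ^ ((2:ℝ) ^ t - 2)) ^ ((2:ℝ) ^ (-(t:ℝ)))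


open ProbabilityTheory

/-! Under (D) the kernel `K_a` (`a ≥ 1`) never leaves a cell `F_i` of level `a`, so on `F_i`
`|q̂_{a,a+1}(h)| ≤ K_a(ḡ_{a,a+1} |h| 1_{F_i})`. Integrating against the `K_a`-invariant `μ_a` and
using that `ḡ_{a,a+1}` is the density of `μ_{a+1}` with respect to `μ_a` gives
`μ_a(F_i) ‖q̂_{a,k} f‖_{a,i,1} ≤ μ_{a+1}(F_i) max_{l ∈ s_{a+1}(i)} ‖q̂_{a+1,k} f‖_{a+1,l,1}`.
Iterating this bound from level `j` to level `k` multiplies the mass ratios along a branch of the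
tree of partitions, which produces `M_{j,k}(i)`. -/

theorem ProbabilityTheory.Kernel.Invariant.integral_integral_eq {κ : Kernel E E} {μ : Measure E}
    [SFinite μ] [IsSFiniteKernel κ] (hκ : κ.Invariant μ) {φ : E → ℝ} (hφ : Integrable φ μ) :
    ∫ x, ∫ y, φ y ∂κ x ∂μ = ∫ y, φ y ∂μ := by
  have hφ' : Integrable φ (κ ∘ₘ μ) := by rwa [hκ.def]
  calc ∫ x, ∫ y, φ y ∂κ x ∂μ = ∫ z, φ z.2 ∂(μ ⊗ₘ κ) :=
        (Measure.integral_compProd ((Measure.integrable_compProd_snd_iff hφ'.1).2 hφ')).symm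
    _ = ∫ y, φ y ∂(κ ∘ₘ μ) := by
        rw [← Measure.snd_compProd, Measure.snd, integral_map measurable_snd.aemeasurable]
        rw [← Measure.snd, Measure.snd_compProd]
        exact hφ'.1
    _ = ∫ y, φ y ∂μ := by rw [hκ.def]

theorem measure_compl_eq_zero_of_iUnion_eq_univ {ι : Type*} [Countable ι] {G : ι → Set E}
    (hcover : ⋃ j, G j = Set.univ) {m : Measure E} {i : ι} (h : ∀ j, j ≠ i → m (G j) = 0) :
    m (G i)ᶜ = 0 := by
  refine measure_mono_null (fun x hx => ?_) (measure_iUnion_null fun j : {j // j ≠ i} => h j j.2)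
  obtain ⟨j, hj⟩ := Set.mem_iUnion.1 (hcover.symm ▸ Set.mem_univ x)
  exact Set.mem_iUnion.2 ⟨⟨j, by rintro rfl; exact hx hj⟩, hj⟩

theorem locNorm_nonneg (ν : Measure E) (p : ℝ) (f : E → ℝ) : 0 ≤ locNorm ν p f :=
  Real.rpow_nonneg (integral_nonneg fun _ => Real.rpow_nonneg (abs_nonneg _) _) _

theorem locNorm_muLoc_one (ν : Measure E) (S : Set E) (f : E → ℝ) :
    locNorm (muLoc ν S) 1 f = (ν S).toReal⁻¹ * ∫ x in S, |f x| ∂ν := by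
  simp [locNorm, muLoc, integral_smul_measure]

theorem setIntegral_abs_eq_measure_mul_locNorm (ν : Measure E) [IsFiniteMeasure ν] (S : Set E)
    (f : E → ℝ) : ∫ x in S, |f x| ∂ν = (ν S).toReal * locNorm (muLoc ν S) 1 f := by
  rw [locNorm_muLoc_one]
  by_cases hS : (ν S).toReal = 0
  · have hS' : ν S = 0 := (ENNReal.toReal_eq_zero_iff _).1 hS |>.resolve_right (measure_ne_top _ _)
    simp [Measure.restrict_eq_zero.2 hS', hS]
  · rw [mul_inv_cancel_left₀ hS]

theorem setIntegral_abs_biUnion_le_measure_mul_sup' {ι : Type*} {ν : Measure E} [IsFiniteMeasure ν]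
    {G : ι → Set E} (hG : ∀ l, MeasurableSet (G l)) {s : Finset ι} (hs : s.Nonempty)
    (hdisj : (s : Set ι).PairwiseDisjoint G) {h : E → ℝ} (hh : Integrable h ν) :
    ∫ x in ⋃ l ∈ s, G l, |h x| ∂ν
      ≤ (ν (⋃ l ∈ s, G l)).toReal * s.sup' hs fun l => locNorm (muLoc ν (G l)) 1 h := by
  rw [integral_biUnion_finset s (fun l _ => hG l) hdisj fun _ _ => hh.abs.integrableOn,
    measure_biUnion_finset hdisj fun l _ => hG l, ENNReal.toReal_sum fun _ _ => measure_ne_top _ _,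
    Finset.sum_mul]
  gcongr with l hl
  rw [setIntegral_abs_eq_measure_mul_locNorm]
  gcongr
  exact Finset.le_sup' (fun l => locNorm (muLoc ν (G l)) 1 h) hl

theorem setIntegral_abs_integral_kernel_le {μ ν : Measure E} [SFinite μ] {κ : Kernel E E}
    [IsSFiniteKernel κ] (hκ : κ.Invariant μ) {w : E → ℝ} (hw : Integrable w μ)
    (hw_nonneg : ∀ x, 0 ≤ w x)
    (hdens : ∀ f : E → ℝ, Measurable f → (∃ C, ∀ x, |f x| ≤ C) →
      ∫ x, f x ∂ν = ∫ x, f x * w x ∂μ)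
    {S : Set E} (hS : MeasurableSet S) (hκS : ∀ x ∈ S, κ x Sᶜ = 0)
    {h : E → ℝ} (hh : Measurable h) {C : ℝ} (hC : ∀ x, |h x| ≤ C) :
    ∫ x in S, |∫ y, w y * h y ∂κ x| ∂μ ≤ ∫ x in S, |h x| ∂ν := by
  set φ : E → ℝ := fun y => S.indicator (fun y => |h y|) y * w y
  have hφ_meas : Measurable (S.indicator fun y => |h y|) := hh.abs.indicator hS
  have hφ_bdd : ∀ y, |S.indicator (fun y => |h y|) y| ≤ C := fun y => by
    by_cases hy : y ∈ S <;> simp [hy, (abs_nonneg _).trans (hC y), hC y]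
  have hφ_nonneg : ∀ y, 0 ≤ φ y := fun y =>
    mul_nonneg (Set.indicator_nonneg (fun _ _ => abs_nonneg _) y) (hw_nonneg y)
  have hφ : Integrable φ μ :=
    hw.bdd_mul hφ_meas.aestronglyMeasurable (Filter.Eventually.of_forall hφ_bdd)
  have hKφ : Integrable (fun x => ∫ y, φ y ∂κ x) μ := by
    have := Measure.integrable_integral_norm_of_integrable_comp (κ := κ) (μ := μ) (f := φ)
      (by rwa [hκ.def])
    simpa only [Real.norm_of_nonneg (hφ_nonneg _)] using this
  have hpoint : ∀ x ∈ S, |∫ y, w y * h y ∂κ x| ≤ ∫ y, φ y ∂κ x := fun x hx => by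
    have hS_ae : ∀ᵐ y ∂κ x, y ∈ S := measure_eq_zero_iff_ae_notMem.1 (hκS x hx) |>.mono
      fun y hy => by simpa using hy
    refine (norm_integral_le_integral_norm fun y => w y * h y).trans_eq (integral_congr_ae ?_)
    filter_upwards [hS_ae] with y hy
    simp [φ, hy, abs_of_nonneg (hw_nonneg y), mul_comm]
  calc ∫ x in S, |∫ y, w y * h y ∂κ x| ∂μ ≤ ∫ x in S, ∫ y, φ y ∂κ x ∂μ :=
        integral_mono_of_nonneg (Filter.Eventually.of_forall fun _ => abs_nonneg _)
          hKφ.integrableOn (ae_restrict_of_forall_mem hS hpoint)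
    _ ≤ ∫ x, ∫ y, φ y ∂κ x ∂μ :=
        setIntegral_le_integral hKφ (Filter.Eventually.of_forall fun _ => integral_nonneg hφ_nonneg)
    _ = ∫ y, φ y ∂μ := hκ.integral_integral_eq hφ
    _ = ∫ x in S, |h x| ∂ν := by
        rw [← hdens _ hφ_meas ⟨C, hφ_bdd⟩, integral_indicator hS]

theorem locNorm_integral_kernel_le {ι : Type*} {μ ν : Measure E} [SFinite μ] [IsFiniteMeasure ν]
    {κ : Kernel E E} [IsSFiniteKernel κ] (hκ : κ.Invariant μ) {w : E → ℝ} (hw : Integrable w μ)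
    (hw_nonneg : ∀ x, 0 ≤ w x)
    (hdens : ∀ f : E → ℝ, Measurable f → (∃ C, ∀ x, |f x| ≤ C) →
      ∫ x, f x ∂ν = ∫ x, f x * w x ∂μ)
    {G : ι → Set E} (hG : ∀ l, MeasurableSet (G l)) {s : Finset ι} (hs : s.Nonempty)
    (hdisj : (s : Set ι).PairwiseDisjoint G) {S : Set E} (hSG : ⋃ l ∈ s, G l = S)
    (hκS : ∀ x ∈ S, κ x Sᶜ = 0) {h : E → ℝ} (hh : Measurable h) {C : ℝ} (hC : ∀ x, |h x| ≤ C) :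
    locNorm (muLoc μ S) 1 (fun x => ∫ y, w y * h y ∂κ x)
      ≤ (ν S).toReal / (μ S).toReal * s.sup' hs fun l => locNorm (muLoc ν (G l)) 1 h := by
  subst hSG
  have hS : MeasurableSet (⋃ l ∈ s, G l) := Finset.measurableSet_biUnion s fun l _ => hG l
  have hh_int : Integrable h ν :=
    Integrable.of_bound hh.aestronglyMeasurable C (Filter.Eventually.of_forall hC)
  rw [locNorm_muLoc_one, div_mul_eq_mul_div, div_eq_inv_mul]
  gcongr
  exact (setIntegral_abs_integral_kernel_le hκ hw hw_nonneg hdens hS hκS hh hC).trans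
    (setIntegral_abs_biUnion_le_measure_mul_sup' hG hs hdisj hh_int)

open Function in
theorem eq_of_subset_of_pairwise_disjoint {α ι : Type*} {G : ι → Set α}
    (hdisj : Pairwise (Disjoint on G)) {A : Set α} (hA : A.Nonempty) {i j : ι}
    (hi : A ⊆ G i) (hj : A ⊆ G j) : i = j := by
  by_contra hij
  obtain ⟨x, hx⟩ := hA
  exact Set.disjoint_left.1 (hdisj hij) (hi hx) (hj hx)

open Function in
theorem biUnion_filter_eq_of_subset {α ι ι' : Type*} [Fintype ι'] [DecidableEq ι]
    {G : ι → Set α} {H : ι' → Set α} {π : ι' → ι} (hdisj : Pairwise (Disjoint on G))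
    (hcover : ⋃ l, H l = Set.univ) (hsub : ∀ l, H l ⊆ G (π l)) (i : ι) :
    ⋃ l ∈ Finset.univ.filter (π · = i), H l = G i := by
  refine Set.Subset.antisymm (Set.iUnion₂_subset fun l hl => ?_) fun x hx => ?_
  · exact (Finset.mem_filter.1 hl).2 ▸ hsub l
  · obtain ⟨l, hl⟩ := Set.mem_iUnion.1 (hcover.symm ▸ Set.mem_univ x)
    have : π l = i := by
      by_contra hne
      exact Set.disjoint_left.1 (hdisj hne) (hsub l hl) hx
    exact Set.mem_biUnion (Finset.mem_filter.2 ⟨Finset.mem_univ l, this⟩) hl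

section Branch

variable {ι : ℕ → Type} {μ : ℕ → Measure E} {F : ∀ k, ι k → Set E} {p : ∀ j k : ℕ, ι k → ι j}

theorem Mprod_nonneg (j k : ℕ) (l : ι k) : 0 ≤ Mprod μ F p j k l :=
  Finset.prod_nonneg fun _ _ => div_nonneg ENNReal.toReal_nonneg ENNReal.toReal_nonneg

theorem Mprod_eq_mRatio_mul {a k : ℕ} (hak : a < k) (l : ι k) :
    Mprod μ F p a k l = mRatio μ F a (p a k l) * Mprod μ F p (a + 1) k l := by
  rw [Mprod, Mprod, Finset.prod_eq_prod_Ico_succ_bot hak]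

theorem Mprod_self_succ (a : ℕ) (l : ι (a + 1)) :
    Mprod μ F p a (a + 1) l = mRatio μ F a (p a (a + 1) l) := by
  rw [Mprod_eq_mRatio_mul a.lt_succ_self, Mprod, Finset.Ico_self, Finset.prod_empty, mul_one]

variable [∀ k, Fintype (ι k)] [∀ k, DecidableEq (ι k)]

theorem mem_succSet {j k : ℕ} {i : ι j} {l : ι k} :
    l ∈ succSet p j k i ↔ p j k l = i := by
  simp [succSet]

theorem succSet_subset_succSet {a k : ℕ}
    (hcomp : ∀ l : ι k, p a k l = p a (a + 1) (p (a + 1) k l))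
    {i : ι a} {l' : ι (a + 1)} (hl' : l' ∈ succSet p a (a + 1) i) :
    succSet p (a + 1) k l' ⊆ succSet p a k i := fun l hl => by
  rw [mem_succSet, hcomp, mem_succSet.1 hl, mem_succSet.1 hl']

open Function in
theorem locNorm_propagate_le_mRatio_mul {a : ℕ} [IsFiniteMeasure (μ a)]
    [IsFiniteMeasure (μ (a + 1))] {κ : Kernel E E} [IsSFiniteKernel κ] (hκ : κ.Invariant (μ a))
    {g : E → ℝ} (hg_meas : Measurable g) (hg_pos : ∀ x, 0 < g x) {Cg : ℝ} (hg_bdd : ∀ x, g x ≤ Cg)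
    (hdens : ∀ f : E → ℝ, Measurable f → (∃ C, ∀ x, |f x| ≤ C) →
      ∫ x, f x ∂μ (a + 1) = (∫ x, f x * g x ∂μ a) / ∫ x, g x ∂μ a)
    (hFmeas : ∀ l, MeasurableSet (F (a + 1) l)) (hdisj : Pairwise (Disjoint on F a))
    (hdisj' : Pairwise (Disjoint on F (a + 1))) (hcover : ⋃ i, F a i = Set.univ)
    (hcover' : ⋃ l, F (a + 1) l = Set.univ) (hp : ∀ l, F (a + 1) l ⊆ F a (p a (a + 1) l))
    (hD : ∀ i x, x ∉ F a i → κ x (F a i) = 0) {h : E → ℝ} (hh : Measurable h) {C : ℝ}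
    (hC : ∀ x, |h x| ≤ C) (i : ι a) (hi : (succSet p a (a + 1) i).Nonempty) :
    locNorm (muLoc (μ a) (F a i)) 1 (fun x => ∫ y, (g y / ∫ z, g z ∂μ a) * h y ∂κ x)
      ≤ mRatio μ F a i * (succSet p a (a + 1) i).sup' hi
          fun l => locNorm (muLoc (μ (a + 1)) (F (a + 1) l)) 1 h := by
  have hw : Integrable (fun y => g y / ∫ z, g z ∂μ a) (μ a) :=
    (Integrable.of_bound hg_meas.aestronglyMeasurable Cg (Filter.Eventually.of_forall fun x => by
      rw [Real.norm_of_nonneg (hg_pos x).le]; exact hg_bdd x)).div_const _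
  have hw_nonneg : ∀ x, 0 ≤ g x / ∫ z, g z ∂μ a := fun x =>
    div_nonneg (hg_pos x).le (integral_nonneg fun z => (hg_pos z).le)
  have hdens' : ∀ f : E → ℝ, Measurable f → (∃ C, ∀ x, |f x| ≤ C) →
      ∫ x, f x ∂μ (a + 1) = ∫ x, f x * (g x / ∫ z, g z ∂μ a) ∂μ a := fun f hf hfC => by
    rw [hdens f hf hfC, ← integral_div]
    simp only [mul_div_assoc]
  have hκF : ∀ x ∈ F a i, κ x (F a i)ᶜ = 0 := fun x hx =>
    measure_compl_eq_zero_of_iUnion_eq_univ hcover fun i' hi' =>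
      hD i' x fun hx' => Set.disjoint_left.1 (hdisj hi') hx' hx
  exact locNorm_integral_kernel_le hκ hw hw_nonneg hdens' hFmeas hi (hdisj'.set_pairwise _)
    (biUnion_filter_eq_of_subset hdisj hcover' hp i) hκF hh hC

theorem le_sup'_Mprod_mul_sup'_of_succ {a k : ℕ} (hak : a < k)
    (hcomp : ∀ l : ι k, p a k l = p a (a + 1) (p (a + 1) k l)) {i : ι a}
    (hne : (succSet p a (a + 1) i).Nonempty) (hne' : ∀ l', (succSet p (a + 1) k l').Nonempty)
    (hneₖ : (succSet p a k i).Nonempty) {N : ι (a + 1) → ℝ} {Nₖ : ι k → ℝ} (hNₖ : ∀ l, 0 ≤ Nₖ l)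
    (hN : ∀ l', N l' ≤ (succSet p (a + 1) k l').sup' (hne' l') (Mprod μ F p (a + 1) k)
      * (succSet p (a + 1) k l').sup' (hne' l') Nₖ)
    {x : ℝ} (hx : x ≤ mRatio μ F a i * (succSet p a (a + 1) i).sup' hne N) :
    x ≤ (succSet p a k i).sup' hneₖ (Mprod μ F p a k) * (succSet p a k i).sup' hneₖ Nₖ := by
  obtain ⟨l', hl', hNl'⟩ := Finset.exists_mem_eq_sup' hne N
  obtain ⟨l, hl, hMl⟩ := Finset.exists_mem_eq_sup' (hne' l') (Mprod μ F p (a + 1) k)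
  have hpl : p a k l = i := by rw [hcomp, mem_succSet.1 hl, mem_succSet.1 hl']
  have hS_nonneg : 0 ≤ (succSet p (a + 1) k l').sup' (hne' l') Nₖ :=
    Finset.le_sup'_of_le _ hl (hNₖ l)
  calc x ≤ mRatio μ F a i * N l' := hNl' ▸ hx
    _ ≤ mRatio μ F a i
          * (Mprod μ F p (a + 1) k l * (succSet p (a + 1) k l').sup' (hne' l') Nₖ) := by
        gcongr
        · exact div_nonneg ENNReal.toReal_nonneg ENNReal.toReal_nonneg
        · exact hMl ▸ hN l'
    _ = Mprod μ F p a k l * (succSet p (a + 1) k l').sup' (hne' l') Nₖ := by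
        rw [Mprod_eq_mRatio_mul (a := a) hak, hpl, mul_assoc]
    _ ≤ _ := mul_le_mul (Finset.le_sup' _ (mem_succSet.2 hpl))
        (Finset.sup'_mono _ (succSet_subset_succSet hcomp hl') _) hS_nonneg
        ((Mprod_nonneg a k l).trans (Finset.le_sup' _ (mem_succSet.2 hpl)))

theorem le_sup'_Mprod_mul_sup' {j k : ℕ} (hjk : j < k)
    (hne : ∀ a b, a < b → b ≤ k → ∀ i : ι a, (succSet p a b i).Nonempty)
    (hcomp : ∀ a, a + 1 < k → ∀ l : ι k, p a k l = p a (a + 1) (p (a + 1) k l))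
    (N : ∀ a, ι a → ℝ) (hN : ∀ l, 0 ≤ N k l)
    (hstep : ∀ a (hak : a < k), j ≤ a → ∀ i : ι a,
      N a i ≤ mRatio μ F a i * (succSet p a (a + 1) i).sup' (hne a (a + 1) a.lt_succ_self hak i)
        (N (a + 1))) (i : ι j) :
    N j i ≤ (succSet p j k i).sup' (hne j k hjk le_rfl i) (Mprod μ F p j k)
      * (succSet p j k i).sup' (hne j k hjk le_rfl i) (N k) := by
  suffices H : ∀ d a (hak : a + 1 + d = k), j ≤ a → ∀ i : ι a,
      N a i ≤ (succSet p a k i).sup' (hne a k (by omega) le_rfl i) (Mprod μ F p a k)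
        * (succSet p a k i).sup' (hne a k (by omega) le_rfl i) (N k) from
    H (k - j - 1) j (by omega) le_rfl i
  intro d
  induction d with
  | zero =>
    intro a hak hja i
    obtain rfl : k = a + 1 := hak.symm
    have hM : (succSet p a (a + 1) i).sup' (hne a (a + 1) a.lt_succ_self le_rfl i)
        (Mprod μ F p a (a + 1)) = mRatio μ F a i := by
      rw [Finset.sup'_congr (g := fun _ => mRatio μ F a i) _ rfl fun l hl => by
        rw [Mprod_self_succ, mem_succSet.1 hl], Finset.sup'_const]
    exact hM ▸ hstep a a.lt_succ_self hja i
  | succ d ih =>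
    intro a hak hja i
    exact le_sup'_Mprod_mul_sup'_of_succ (by omega) (hcomp a (by omega)) _ _ _ hN
      (ih (a + 1) (by omega) (by omega)) (hstep a (by omega) hja i)

end Branch

theorem measurable_and_bounded_of_integral_kernel_recursion {κ : ℕ → Kernel E E}
    [∀ a, IsMarkovKernel (κ a)] {w Q : ℕ → E → ℝ} {k : ℕ} (hw_meas : ∀ a, Measurable (w a))
    (hw_bdd : ∀ a, ∃ C, ∀ x, |w a x| ≤ C) (hQk_meas : Measurable (Q k))
    (hQk_bdd : ∃ C, ∀ x, |Q k x| ≤ C)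
    (hQ : ∀ a < k, ∀ x, Q a x = ∫ y, w a y * Q (a + 1) y ∂κ a x) :
    ∀ a ≤ k, Measurable (Q a) ∧ ∃ C, ∀ x, |Q a x| ≤ C := by
  intro a hak
  induction hak using Nat.decreasingInduction with
  | self => exact ⟨hQk_meas, hQk_bdd⟩
  | of_succ a hak ih =>
    obtain ⟨hQ_meas, C, hC⟩ := ih
    obtain ⟨Cw, hCw⟩ := hw_bdd a
    have hφ : ∀ y, ‖w a y * Q (a + 1) y‖ ≤ Cw * C := fun y => by
      rw [Real.norm_eq_abs, abs_mul]
      exact mul_le_mul (hCw y) (hC y) (abs_nonneg _) ((abs_nonneg _).trans (hCw y))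
    rw [show Q a = fun x => ∫ y, w a y * Q (a + 1) y ∂κ a x from funext (hQ a hak)]
    refine ⟨((hw_meas a).mul hQ_meas).stronglyMeasurable.integral_kernel.measurable,
      Cw * C, fun x => ?_⟩
    simpa using norm_integral_le_of_norm_le_const (μ := κ a x) (Filter.Eventually.of_forall hφ)

theorem maxNorm_le_sup'_mul_maxNorm {ι : ℕ → Type} [∀ k, Fintype (ι k)] [∀ k, Nonempty (ι k)]
    {μ : ℕ → Measure E} {F : ∀ k, ι k → Set E} {j k : ℕ} {q f : E → ℝ} {M : ι j → ℝ}
    (hM : ∀ i, 0 ≤ M i) {s : ι j → Finset (ι k)} (hs : ∀ i, (s i).Nonempty)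
    (h : ∀ i, locNorm (muLoc (μ j) (F j i)) 1 q
      ≤ M i * (s i).sup' (hs i) fun l => locNorm (muLoc (μ k) (F k l)) 1 f) :
    maxNorm μ F j 1 q ≤ Finset.univ.sup' Finset.univ_nonempty M * maxNorm μ F k 1 f := by
  have hS_nonneg : ∀ i, 0 ≤ (s i).sup' (hs i) fun l => locNorm (muLoc (μ k) (F k l)) 1 f :=
    fun i => (hs i).elim fun l hl => Finset.le_sup'_of_le _ hl (locNorm_nonneg _ _ _)
  calc maxNorm μ F j 1 q
      ≤ Finset.univ.sup' Finset.univ_nonempty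
          (M * fun i => (s i).sup' (hs i) fun l => locNorm (muLoc (μ k) (F k l)) 1 f) :=
        Finset.sup'_mono_fun fun i _ => h i
    _ ≤ Finset.univ.sup' Finset.univ_nonempty M * Finset.univ.sup' Finset.univ_nonempty
          fun i => (s i).sup' (hs i) fun l => locNorm (muLoc (μ k) (F k l)) 1 f :=
        Finset.sup'_mul_le_mul_sup'_of_nonneg (fun i _ => hM i) (fun i _ => hS_nonneg i) _
    _ ≤ _ := by
        gcongr
        · exact Finset.le_sup'_of_le _ (Finset.mem_univ (Classical.arbitrary _)) (hM _)
        · exact Finset.sup'_le _ _ fun i _ => Finset.sup'_mono _ (Finset.subset_univ _) _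

theorem stmt_12_general
    (n : ℕ) (μ : ℕ → Measure E)
    (hμprob : ∀ k, k ≤ n → IsProbabilityMeasure (μ k))
    (g : ℕ → E → ℝ)
    (hgmeas : ∀ k, Measurable (g k))
    (hgpos : ∀ k x, 0 < g k x)
    (hgbdd : ∀ k, ∃ C : ℝ, ∀ x, g k x ≤ C)
    (hgdens : ∀ k, k < n → ∀ f : E → ℝ, Measurable f → (∃ C : ℝ, ∀ x, |f x| ≤ C) →
      (∫ x, f x ∂(μ (k+1))) = (∫ x, f x * g k x ∂(μ k)) / (∫ x, g k x ∂(μ k)))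
    (K : ℕ → E → Measure E)
    (hKprob : ∀ k x, IsProbabilityMeasure (K k x))
    (hKmeas : ∀ k (A : Set E), MeasurableSet A → Measurable fun x => K k x A)
    (hKinv : ∀ k, k ≤ n → (μ k).bind (K k) = μ k)
    (F : ∀ k, I k → Set E)
    (hFmeas : ∀ k j, MeasurableSet (F k j))
    (hFpos : ∀ k, k ≤ n → ∀ j, 0 < μ 0 (F k j))
    (hFdisj : ∀ k, k ≤ n → ∀ j j' : I k, j ≠ j' → Disjoint (F k j) (F k j'))
    (hFcover : ∀ k, k ≤ n → (⋃ j : I k, F k j) = Set.univ)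
    (p : ∀ j k : ℕ, I k → I j)
    (hp : ∀ j k, j < k → k ≤ n → ∀ l : I k, F k l ⊆ F j (p j k l))
    (hsne : ∀ (j k : ℕ) (_ : j < k) (_ : k ≤ n) (i : I j), (succSet p j k i).Nonempty)
    (hD : ∀ k, 1 ≤ k → k ≤ n → ∀ (j : I k) (x : E), x ∉ F k j → K k x (F k j) = 0)
    (qhat : ℕ → ℕ → (E → ℝ) → E → ℝ)
    (hqdiag : ∀ k f, qhat k k f = f)
    (hqstep : ∀ j k, j < k → k ≤ n → ∀ (f : E → ℝ) (x : E),
      qhat j k f x = ∫ y, (g j y / (∫ z, g j z ∂(μ j))) * qhat (j+1) k f y ∂(K j x))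
 :
    ∀ (j k : ℕ) (hjk : j < k) (hkn : k ≤ n), 1 ≤ j → ∀ f : E → ℝ, Measurable f → (∃ C : ℝ, ∀ x, |f x| ≤ C) →
      (∀ i : I j,
        locNorm (muLoc (μ j) (F j i)) 1 (qhat j k f)
          ≤ ((succSet p j k i).sup' (hsne j k hjk hkn i) (Mprod μ F p j k))
            * ((succSet p j k i).sup' (hsne j k hjk hkn i) fun l =>
                locNorm (muLoc (μ k) (F k l)) 1 f))
      ∧ maxNorm μ F j 1 (qhat j k f)
          ≤ (Finset.univ.sup' Finset.univ_nonempty fun i : I j =>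
              (succSet p j k i).sup' (hsne j k hjk hkn i) (Mprod μ F p j k))
            * maxNorm μ F k 1 f := by
  intro j k hjk hkn hj1 f hfm hfb
  let κ : ℕ → Kernel E E := fun a => ⟨K a, Measure.measurable_of_measurable_coe _ (hKmeas a)⟩
  have : ∀ a, IsMarkovKernel (κ a) := fun a => ⟨hKprob a⟩
  have hw_bdd : ∀ a, ∃ C, ∀ x, |g a x / ∫ z, g a z ∂μ a| ≤ C := fun a => by
    obtain ⟨C, hC⟩ := hgbdd a
    exact ⟨C / |∫ z, g a z ∂μ a|, fun x => by
      rw [abs_div, abs_of_pos (hgpos a x)]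
      exact div_le_div_of_nonneg_right (hC x) (abs_nonneg _)⟩
  have hreg := measurable_and_bounded_of_integral_kernel_recursion (κ := κ) (Q := (qhat · k f))
    (fun a => (hgmeas a).div_const _) hw_bdd (by rwa [hqdiag]) (by rwa [hqdiag])
    fun a hak => hqstep a k hak hkn f
  have hdisj : ∀ a ≤ n, Pairwise (Function.onFun Disjoint (F a)) := fun a ha i i' h =>
    hFdisj a ha i i' h
  have hcomp : ∀ a, a + 1 < k → ∀ l : I k, p a k l = p a (a + 1) (p (a + 1) k l) :=
    fun a hak l => eq_of_subset_of_pairwise_disjoint (hdisj a (by omega))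
      (nonempty_of_measure_ne_zero (hFpos k hkn l).ne') (hp a k (by omega) hkn l)
      ((hp (a + 1) k hak hkn l).trans (hp a (a + 1) (by omega) (by omega) _))
  have hlocal := le_sup'_Mprod_mul_sup' (μ := μ) (F := F) hjk
    (fun a b hab hbk => hsne a b hab (hbk.trans hkn)) hcomp
    (fun a i => locNorm (muLoc (μ a) (F a i)) 1 (qhat a k f)) (fun _ => locNorm_nonneg _ _ _)
    fun a hak hja i => by
      have := hμprob a (by omega)
      have := hμprob (a + 1) (by omega)
      obtain ⟨Cg, hCg⟩ := hgbdd a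
      obtain ⟨hq_meas, Cq, hCq⟩ := hreg (a + 1) hak
      rw [show qhat a k f = _ from funext (hqstep a k hak hkn f)]
      exact locNorm_propagate_le_mRatio_mul (κ := κ a) (hKinv a (by omega)) (hgmeas a)
        (hgpos a) hCg (hgdens a (by omega)) (hFmeas (a + 1)) (hdisj a (by omega))
        (hdisj (a + 1) (by omega)) (hFcover a (by omega)) (hFcover (a + 1) (by omega))
        (hp a (a + 1) a.lt_succ_self (by omega)) (hD a (by omega) (by omega)) hq_meas hCq i _
  simp only [hqdiag] at hlocal
  exact ⟨hlocal, maxNorm_le_sup'_mul_maxNorm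
    (fun i => (hsne j k hjk hkn i).elim fun l hl => Finset.le_sup'_of_le _ hl (Mprod_nonneg j k l))
    (fun i => hsne j k hjk hkn i) hlocal⟩

theorem stmt_12
    (n : ℕ) (μ : ℕ → Measure E)
    (hμprob : ∀ k, k ≤ n → IsProbabilityMeasure (μ k))
    (hμac : ∀ j k, j ≤ n → k ≤ n → μ j ≪ μ k)
    (g : ℕ → E → ℝ)
    (hgmeas : ∀ k, Measurable (g k))
    (hgpos : ∀ k x, 0 < g k x)
    (hgbdd : ∀ k, ∃ C : ℝ, ∀ x, g k x ≤ C)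
    (hgdens : ∀ k, k < n → ∀ f : E → ℝ, Measurable f → (∃ C : ℝ, ∀ x, |f x| ≤ C) →
      (∫ x, f x ∂(μ (k+1))) = (∫ x, f x * g k x ∂(μ k)) / (∫ x, g k x ∂(μ k)))
    (K : ℕ → E → Measure E)
    (hKprob : ∀ k x, IsProbabilityMeasure (K k x))
    (hKmeas : ∀ k (A : Set E), MeasurableSet A → Measurable fun x => K k x A)
    (hKinv : ∀ k, k ≤ n → (μ k).bind (K k) = μ k)
    (F : ∀ k, I k → Set E)
    (hFmeas : ∀ k j, MeasurableSet (F k j))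
    (hFpos : ∀ k, k ≤ n → ∀ j, 0 < μ 0 (F k j))
    (hFdisj : ∀ k, k ≤ n → ∀ j j' : I k, j ≠ j' → Disjoint (F k j) (F k j'))
    (hFcover : ∀ k, k ≤ n → (⋃ j : I k, F k j) = Set.univ)
    (p : ∀ j k : ℕ, I k → I j)
    (hp : ∀ j k, j < k → k ≤ n → ∀ l : I k, F k l ⊆ F j (p j k l))
    (hsne : ∀ (j k : ℕ) (_ : j < k) (_ : k ≤ n) (i : I j), (succSet p j k i).Nonempty)
    (hD : ∀ k, 1 ≤ k → k ≤ n → ∀ (j : I k) (x : E), x ∉ F k j → K k x (F k j) = 0)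
    (qhat : ℕ → ℕ → (E → ℝ) → E → ℝ)
    (hqdiag : ∀ k f, qhat k k f = f)
    (hqstep : ∀ j k, j < k → k ≤ n → ∀ (f : E → ℝ) (x : E),
      qhat j k f x = ∫ y, (g j y / (∫ z, g j z ∂(μ j))) * qhat (j+1) k f y ∂(K j x))
 :
    ∀ (j k : ℕ) (hjk : j < k) (hkn : k ≤ n), 1 ≤ j → ∀ f : E → ℝ, Measurable f → (∃ C : ℝ, ∀ x, |f x| ≤ C) →
      (∀ i : I j,
        locNorm (muLoc (μ j) (F j i)) 1 (qhat j k f)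
          ≤ ((succSet p j k i).sup' (hsne j k hjk hkn i) (Mprod μ F p j k))
            * ((succSet p j k i).sup' (hsne j k hjk hkn i) fun l =>
                locNorm (muLoc (μ k) (F k l)) 1 f))
      ∧ maxNorm μ F j 1 (qhat j k f)
          ≤ (Finset.univ.sup' Finset.univ_nonempty fun i : I j =>
              (succSet p j k i).sup' (hsne j k hjk hkn i) (Mprod μ F p j k))
            * maxNorm μ F k 1 f :=
  stmt_12_general n μ hμprob g hgmeas hgpos hgbdd hgdens K hKprob hKmeas hKinv F hFmeas hFpos hFdisj
    hFcover p hp hsne hD qhat hqdiag hqstep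
end
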